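/- arXiv:1806.01969 — 8 statements merged into one kernel-verified Lean document; each statement's English description precedes it below -/
import Mathlib

section
/- For full-rank X ∈ ℝ^{n×d} (n ≥ d) and any integer s with d ≤ s ≤ n, the sum over all size-s subsets S ⊆ {1..n} of det(X_S^⊤ X_S) equals (n−d choose s−d) · det(X^⊤ X), where X_S denotes the submatrix of rows indexed by S. -/
open Matrix Finset
open Equiv Function

noncomputable section

/-- The submatrix of `X` consisting of the rows indexed by the subset `S`. -/
def rowSub {n d : ℕ} (X : Matrix (Fin n) (Fin d) ℝ) (S : Finset (Fin n)) :
    Matrix {i // i ∈ S} (Fin d) ℝ :=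
  X.submatrix (fun i => (i : Fin n)) id

/-- `X_S^⊤ X_S`. -/
def gram {n d : ℕ} (X : Matrix (Fin n) (Fin d) ℝ) (S : Finset (Fin n)) :
    Matrix (Fin d) (Fin d) ℝ :=
  (rowSub X S)ᵀ * rowSub X S

variable {d : ℕ} {ι : Type*} [Fintype ι] [LinearOrder ι]

local notation "ε " σ:arg => ((Equiv.Perm.sign σ : ℤ) : ℝ)

/-- pairwise minor product, as a total function. -/
noncomputable def minorPair (M : Matrix (Fin d) ι ℝ) (N : Matrix ι (Fin d) ℝ)
    (T : Finset ι) : ℝ :=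
  if h : T.card = d then
    (M.submatrix id (T.orderEmbOfFin h)).det * (N.submatrix (T.orderEmbOfFin h) id).det
  else 0

theorem cauchy_binet_gen (M : Matrix (Fin d) ι ℝ) (N : Matrix ι (Fin d) ℝ) :
    (M * N).det = ∑ T ∈ Finset.powersetCard d (Finset.univ : Finset ι), minorPair M N T := by
  classical
  have key : ∀ f : Fin d → ι,
      (∑ σ : Perm (Fin d), ε σ * ∏ i, M (σ i) (f i) * N (f i) i)
        = (∏ j, N (f j) j) * (M.submatrix id f).det := by
    intro f
    rw [det_apply', Finset.mul_sum]
    refine Finset.sum_congr rfl fun σ _ => ?_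
    rw [Finset.prod_mul_distrib]
    simp only [submatrix_apply, id_eq]
    ring
  have step1 : (M * N).det
      = ∑ f : Fin d → ι, (∏ j, N (f j) j) * (M.submatrix id f).det := by
    calc (M * N).det
        = ∑ f : Fin d → ι, ∑ σ : Perm (Fin d), ε σ * ∏ i, M (σ i) (f i) * N (f i) i := by
          simp only [det_apply', mul_apply, prod_univ_sum, mul_sum, Fintype.piFinset_univ]
          rw [Finset.sum_comm]
      _ = _ := Finset.sum_congr rfl fun f _ => key f
  -- kill non-injective f
  have step2 : (M * N).det
      = ∑ f ∈ Finset.univ.filter (fun f : Fin d → ι => Function.Injective f),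
          (∏ j, N (f j) j) * (M.submatrix id f).det := by
    rw [step1]
    refine (Finset.sum_subset (Finset.filter_subset _ _) fun f _ hf => ?_).symm
    have hninj : ¬ Function.Injective f := by simpa using hf
    obtain ⟨i, j, hij, hne⟩ : ∃ i j, f i = f j ∧ i ≠ j := by
      rw [Function.Injective] at hninj
      push_neg at hninj
      exact hninj
    have : (M.submatrix id f).det = 0 :=
      Matrix.det_zero_of_column_eq hne (fun k => by simp [hij])
    rw [this, mul_zero]
  -- group by image
  have step3 : (M * N).det
      = ∑ T ∈ Finset.powersetCard d (Finset.univ : Finset ι),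
          ∑ f ∈ (Finset.univ.filter (fun f : Fin d → ι => Function.Injective f)).filter
              (fun f => Finset.image f Finset.univ = T),
            (∏ j, N (f j) j) * (M.submatrix id f).det := by
    rw [step2]
    refine (Finset.sum_fiberwise_of_maps_to (fun f hf => ?_) _).symm
    have hinj : Function.Injective f := by simpa using hf
    simp [Finset.mem_powersetCard_univ, Finset.card_image_of_injective _ hinj]
  rw [step3]
  refine Finset.sum_congr rfl fun T hT => ?_
  have hTd : T.card = d := (Finset.mem_powersetCard_univ.mp hT)
  set e := T.orderEmbOfFin hTd with he
  -- inner sum equals sum over permutations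
  have hbij : ∑ f ∈ (Finset.univ.filter (fun f : Fin d → ι => Function.Injective f)).filter
        (fun f => Finset.image f Finset.univ = T),
        (∏ j, N (f j) j) * (M.submatrix id f).det
      = ∑ σ : Perm (Fin d), (∏ j, N (e (σ j)) j) * (M.submatrix id (e ∘ σ)).det := by
    refine (Finset.sum_bij (fun (σ : Perm (Fin d)) (_ : σ ∈ Finset.univ) => (fun j => e (σ j) : Fin d → ι)) ?_ ?_ ?_ ?_).symm
    · intro σ _
      have hinj : Function.Injective (fun j => e (σ j) : Fin d → ι) := e.injective.comp σ.injective
      simp only [Finset.mem_filter, Finset.mem_univ, true_and]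
      refine ⟨hinj, ?_⟩
      apply Finset.eq_of_subset_of_card_le
      · intro x hx
        rcases Finset.mem_image.mp hx with ⟨j, _, rfl⟩
        exact T.orderEmbOfFin_mem hTd _
      · rw [Finset.card_image_of_injective _ hinj, Finset.card_univ, Fintype.card_fin, hTd]
    · intro σ _ τ _ hστ
      exact Equiv.ext fun j => e.injective (congrFun hστ j)
    · intro f hf
      simp only [Finset.mem_filter, Finset.mem_univ, true_and] at hf
      obtain ⟨hinj, him⟩ := hf
      have hmem : ∀ j, f j ∈ T := by
        intro j
        rw [← him]
        exact Finset.mem_image_of_mem f (Finset.mem_univ j)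
      set g : Fin d → Fin d := fun j => (T.orderIsoOfFin hTd).symm ⟨f j, hmem j⟩ with hg
      have hginj : Function.Injective g := by
        intro a b hab
        apply hinj
        have := congrArg (T.orderIsoOfFin hTd) hab
        simp only [hg, OrderIso.apply_symm_apply] at this
        exact congrArg Subtype.val this
      refine ⟨Equiv.ofBijective g (Finite.injective_iff_bijective.mp hginj), Finset.mem_univ _, ?_⟩
      funext j
      show e (g j) = f j
      have h1 : (T.orderIsoOfFin hTd) (g j) = ⟨f j, hmem j⟩ := by
        simp [hg]
      calc e (g j) = ((T.orderIsoOfFin hTd) (g j) : ι) := rfl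
        _ = f j := by rw [h1]
    · intro σ _
      rfl
  rw [hbij]
  have hdet : ∀ σ : Perm (Fin d),
      (M.submatrix id (e ∘ σ)).det = ε σ * (M.submatrix id e).det := by
    intro σ
    have : M.submatrix id (e ∘ σ) = (M.submatrix id e).submatrix id σ := by
      ext i j; simp
    rw [this]
    exact Matrix.det_permute' σ _
  have : ∑ σ : Perm (Fin d), (∏ j, N (e (σ j)) j) * (M.submatrix id (e ∘ σ)).det
      = (M.submatrix id e).det * ∑ σ : Perm (Fin d), ε σ * ∏ j, N (e (σ j)) j := by
    rw [Finset.mul_sum]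
    refine Finset.sum_congr rfl fun σ _ => ?_
    rw [hdet σ]; ring
  rw [this]
  have hNdet : (N.submatrix e id).det = ∑ σ : Perm (Fin d), ε σ * ∏ j, N (e (σ j)) j := by
    rw [det_apply']
    simp
  rw [← hNdet, minorPair, dif_pos hTd]

lemma minorPair_transpose (N : Matrix ι (Fin d) ℝ) (T : Finset ι) :
    minorPair Nᵀ N T =
      if h : T.card = d then ((N.submatrix (T.orderEmbOfFin h) id).det)^2 else 0 := by
  unfold minorPair
  by_cases h : T.card = d
  · rw [dif_pos h, dif_pos h]
    have : Nᵀ.submatrix id (T.orderEmbOfFin h) = (N.submatrix (T.orderEmbOfFin h) id)ᵀ := by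
      ext i j; simp
    rw [this, Matrix.det_transpose, sq]
  · rw [dif_neg h, dif_neg h]

lemma rowSub_minor {n d : ℕ} (X : Matrix (Fin n) (Fin d) ℝ) (S : Finset (Fin n))
    (T' : Finset {i // i ∈ S}) :
    minorPair (rowSub X S)ᵀ (rowSub X S) T'
      = minorPair Xᵀ X (T'.map (Function.Embedding.subtype _)) := by
  rw [minorPair_transpose, minorPair_transpose]
  have hcard : (T'.map (Function.Embedding.subtype _)).card = T'.card := Finset.card_map _
  by_cases h : T'.card = d
  · have h2 : (T'.map (Function.Embedding.subtype _)).card = d := hcard.trans h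
    rw [dif_pos h, dif_pos h2]
    have hfun : (fun j => ((T'.orderEmbOfFin h j : {i // i ∈ S}) : Fin n))
        = (T'.map (Function.Embedding.subtype _)).orderEmbOfFin h2 := by
      apply Finset.orderEmbOfFin_unique
      · intro j
        exact Finset.mem_map_of_mem _ (T'.orderEmbOfFin_mem h j)
      · intro a b hab
        exact Subtype.coe_lt_coe.mpr ((T'.orderEmbOfFin h).strictMono hab)
    have : (rowSub X S).submatrix (T'.orderEmbOfFin h) id
        = X.submatrix ((T'.map (Function.Embedding.subtype _)).orderEmbOfFin h2) id := by
      rw [← hfun]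
      ext i j; simp [rowSub]
    rw [this]
  · rw [dif_neg h, dif_neg (by rw [hcard]; exact h)]

lemma gram_det_eq {n d : ℕ} (X : Matrix (Fin n) (Fin d) ℝ) (S : Finset (Fin n)) :
    (gram X S).det = ∑ T ∈ Finset.powersetCard d S, minorPair Xᵀ X T := by
  classical
  have h0 : (gram X S).det
      = ∑ T' ∈ Finset.powersetCard d (Finset.univ : Finset {i // i ∈ S}),
          minorPair (rowSub X S)ᵀ (rowSub X S) T' := cauchy_binet_gen _ _
  rw [h0]
  have hmap : Finset.powersetCard d S
      = (Finset.powersetCard d (Finset.univ : Finset {i // i ∈ S})).map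
          (Finset.mapEmbedding (Function.Embedding.subtype _)).toEmbedding := by
    ext T
    simp only [Finset.mem_map, Finset.mem_powersetCard_univ, Finset.mem_powersetCard,
      RelEmbedding.coe_toEmbedding, Finset.mapEmbedding_apply]
    constructor
    · rintro ⟨hTS, hTd⟩
      have hback : (T.subtype (· ∈ S)).map (Function.Embedding.subtype _) = T := by
        rw [Finset.subtype_map]
        exact Finset.filter_true_of_mem fun x hx => hTS hx
      refine ⟨T.subtype (· ∈ S), ⟨Finset.subset_univ _, ?_⟩, hback⟩
      rw [← hTd]
      calc (T.subtype (· ∈ S)).card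
          = ((T.subtype (· ∈ S)).map (Function.Embedding.subtype _)).card :=
            (Finset.card_map _).symm
        _ = T.card := by rw [hback]
    · rintro ⟨T', hT', rfl⟩
      constructor
      · intro x hx
        rcases Finset.mem_map.mp hx with ⟨a, _, rfl⟩
        exact a.2
      · rw [Finset.card_map, hT'.2]
  rw [hmap, Finset.sum_map]
  refine Finset.sum_congr rfl fun T' _ => ?_
  rw [rowSub_minor]
  rfl

lemma full_det_eq {n d : ℕ} (X : Matrix (Fin n) (Fin d) ℝ) :
    (Xᵀ * X).det = ∑ T ∈ Finset.powersetCard d (Finset.univ : Finset (Fin n)),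
      minorPair Xᵀ X T := cauchy_binet_gen _ _

lemma count_supersets {n d s : ℕ} (hds : d ≤ s) (T : Finset (Fin n)) (hTd : T.card = d) :
    ((Finset.powersetCard s (Finset.univ : Finset (Fin n))).filter (fun S => T ⊆ S)).card
      = (n - d).choose (s - d) := by
  classical
  have : ((Finset.powersetCard s (Finset.univ : Finset (Fin n))).filter (fun S => T ⊆ S)).card
      = (Finset.powersetCard (s - d) ((Finset.univ : Finset (Fin n)) \ T)).card := by
    apply Finset.card_bij' (fun S _ => S \ T) (fun U _ => U ∪ T)
    · intro S hS
      simp only [Finset.mem_filter, Finset.mem_powersetCard_univ] at hS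
      obtain ⟨hScard, hTS⟩ := hS
      rw [Finset.mem_powersetCard]
      constructor
      · exact Finset.sdiff_subset_sdiff (Finset.subset_univ _) le_rfl
      · rw [Finset.card_sdiff_of_subset hTS, hScard, hTd]
    · intro U hU
      rw [Finset.mem_powersetCard] at hU
      obtain ⟨hUsub, hUcard⟩ := hU
      have hdisj : Disjoint U T := by
        intro V hVU hVT
        intro x hx
        have h1 := hUsub (hVU hx)
        rw [Finset.mem_sdiff] at h1
        exact absurd (hVT hx) h1.2
      simp only [Finset.mem_filter, Finset.mem_powersetCard_univ]
      refine ⟨?_, Finset.subset_union_right⟩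
      rw [Finset.card_union_of_disjoint hdisj, hUcard, hTd]
      omega
    · intro S hS
      simp only [Finset.mem_filter] at hS
      exact Finset.sdiff_union_of_subset hS.2
    · intro U hU
      rw [Finset.mem_powersetCard] at hU
      apply Finset.union_sdiff_cancel_right
      intro V hVU hVT
      intro x hx
      have h1 := hU.1 (hVU hx)
      rw [Finset.mem_sdiff] at h1
      exact absurd (hVT hx) h1.2
  rw [this, Finset.card_powersetCard, Finset.card_sdiff_of_subset (Finset.subset_univ _),
    Finset.card_univ, Fintype.card_fin, hTd]


/-- Generalized Cauchy–Binet: the sum over all size-`s` subsets `S` of `det(X_S^⊤ X_S)`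
equals `(n−d choose s−d) · det(X^⊤ X)`. -/
theorem generalized_cauchy_binet {n d : ℕ} (X : Matrix (Fin n) (Fin d) ℝ)
    (hdn : d ≤ n) (hX : 0 < (Xᵀ * X).det) (s : ℕ) (hds : d ≤ s) (hsn : s ≤ n) :
    ∑ S ∈ Finset.powersetCard s (Finset.univ : Finset (Fin n)), (gram X S).det
      = ((n - d).choose (s - d) : ℝ) * (Xᵀ * X).det := by
    classical
  calc ∑ S ∈ Finset.powersetCard s (Finset.univ : Finset (Fin n)), (gram X S).det
      = ∑ S ∈ Finset.powersetCard s (Finset.univ : Finset (Fin n)),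
          ∑ T ∈ Finset.powersetCard d S, minorPair Xᵀ X T :=
        Finset.sum_congr rfl fun S _ => gram_det_eq X S
    _ = ∑ S ∈ Finset.powersetCard s (Finset.univ : Finset (Fin n)),
          ∑ T ∈ Finset.powersetCard d (Finset.univ : Finset (Fin n)),
            if T ⊆ S then minorPair Xᵀ X T else 0 := by
        refine Finset.sum_congr rfl fun S hS => ?_
        have hf : Finset.powersetCard d S
            = (Finset.powersetCard d (Finset.univ : Finset (Fin n))).filter (fun T => T ⊆ S) := by
          ext T
          simp only [Finset.mem_powersetCard, Finset.mem_filter, Finset.subset_univ, true_and]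
          tauto
        rw [hf, Finset.sum_filter]
    _ = ∑ T ∈ Finset.powersetCard d (Finset.univ : Finset (Fin n)),
          ∑ S ∈ Finset.powersetCard s (Finset.univ : Finset (Fin n)),
            if T ⊆ S then minorPair Xᵀ X T else 0 := Finset.sum_comm
    _ = ∑ T ∈ Finset.powersetCard d (Finset.univ : Finset (Fin n)),
          ((n - d).choose (s - d) : ℝ) * minorPair Xᵀ X T := by
        refine Finset.sum_congr rfl fun T hT => ?_
        have hTd : T.card = d := Finset.mem_powersetCard_univ.mp hT
        rw [← Finset.sum_filter, Finset.sum_const, count_supersets hds T hTd, nsmul_eq_mul]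
    _ = ((n - d).choose (s - d) : ℝ) * (Xᵀ * X).det := by
        rw [← Finset.mul_sum, full_det_eq]
end
end

section
/- Let X ∈ ℝ^{n×d} be full rank and d ≤ s ≤ n. If S ⊆ {1..n} is sampled with probability P(S) = det(X_S^⊤X_S) / ((n−d choose s−d) det(X^⊤X)) over subsets of size s, then for any fixed index i ∈ {1..n}, the marginal probability satisfies P(i ∈ S) = (s−d)/(n−d) + ((n−s)/(n−d)) · x_i^⊤(X^⊤X)^{−1}x_i. -/
open Matrix Finset

noncomputable section

/-!
By Cauchy–Binet, `det (X_Sᵀ X_S)` is the sum of the squares of the `d × d` minors of `X` with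
rows in `S`. Since a `d`-set lies in `C(|U| - d, s - d)` of the `s`-subsets of `U`, the total
unnormalised mass of the `s`-subsets of `U` is `C(|U| - d, s - d) · det (X_Uᵀ X_U)`. Taking
`U = univ` and `U = {i}ᶜ`, where `det (Xᵀ X - x_i x_iᵀ) = det (Xᵀ X) (1 - ℓ_i)` for the leverage
score `ℓ_i` by the matrix determinant lemma, the sets avoiding `i` have probability
`C(n - d - 1, s - d) / C(n - d, s - d) · (1 - ℓ_i) = (n - s) / (n - d) · (1 - ℓ_i)`.
-/

open Function

section CauchyBinet

variable {R : Type*} [CommRing R] {m : Type*}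

theorem Matrix.det_mul_eq_sum_prod_mul_det [Fintype m] {n : Type*} [Fintype n] [DecidableEq n]
    (A : Matrix n m R) (B : Matrix m n R) :
    (A * B).det = ∑ f : n → m, (∏ j, A j (f j)) * (B.submatrix f id).det := by
  have hrows : (A * B).det = detRowAlternating.toMultilinearMap fun j => ∑ k, A j k • B k := by
    change (A * B).det = detRowAlternating _
    congr 1
    ext j l
    simp [Matrix.mul_apply]
  rw [hrows, MultilinearMap.map_sum]
  refine sum_congr rfl fun f _ => ?_
  exact detRowAlternating.toMultilinearMap.map_smul_univ (fun j => A j (f j)) (fun j => B (f j))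

theorem Matrix.sum_perm_prod_mul_det_submatrix_comp {d : ℕ} (A : Matrix (Fin d) m R)
    (B : Matrix m (Fin d) R) (g : Fin d → m) :
    ∑ σ : Equiv.Perm (Fin d), (∏ j, A j (g (σ j))) * (B.submatrix (g ∘ σ) id).det
      = (A.submatrix id g).det * (B.submatrix g id).det := by
  rw [← det_transpose (A.submatrix id g), det_apply, sum_mul]
  refine sum_congr rfl fun σ _ => ?_
  rw [show B.submatrix (g ∘ σ) id = (B.submatrix g id).submatrix σ id from rfl, det_permute,
    Units.smul_def, zsmul_eq_mul]
  simp only [transpose_apply, submatrix_apply, id_eq]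
  ring

variable {M : Type*} [AddCommMonoid M] [Fintype m] [LinearOrder m] {d : ℕ}

theorem Finset.sum_injective_eq_sum_strictMono_sum_perm (F : (Fin d → m) → M) :
    ∑ f with Injective f, F f = ∑ g with StrictMono g, ∑ σ : Equiv.Perm (Fin d), F (g ∘ σ) := by
  rw [← sum_product' (f := fun g (σ : Equiv.Perm (Fin d)) => F (g ∘ σ))]
  symm
  -- an injective tuple is uniquely its increasing rearrangement composed with a permutation
  refine sum_nbij' (fun p => p.1 ∘ p.2) (fun f => (f ∘ Tuple.sort f, (Tuple.sort f)⁻¹))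
    ?_ ?_ ?_ ?_ ?_
  · rintro ⟨g, σ⟩ h
    simp only [mem_filter, mem_product, mem_univ, true_and, and_true] at h ⊢
    exact h.injective.comp σ.injective
  · intro f hf
    simp only [mem_filter, mem_univ, true_and, mem_product, and_true] at hf ⊢
    exact (Tuple.monotone_sort f).strictMono_of_injective (hf.comp (Tuple.sort f).injective)
  · rintro ⟨g, σ⟩ h
    simp only [mem_filter, mem_product, mem_univ, true_and, and_true] at h
    have hsort : g ∘ σ ∘ Tuple.sort (g ∘ σ) = g := by
      rw [← comp_assoc, Tuple.comp_perm_comp_sort_eq_comp_sort,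
        Tuple.sort_eq_refl_iff_monotone.mpr h.monotone]
      rfl
    have hperm : Tuple.sort (g ∘ σ) = σ⁻¹ := Equiv.ext fun j =>
      Equiv.Perm.eq_inv_iff_eq.mpr (h.injective (congrFun hsort j))
    simp only [hperm, inv_inv, Prod.mk.injEq, and_true]
    ext j
    simp
  · intro f _
    simp [comp_assoc]
  · intro _ _
    rfl

/-- **Cauchy–Binet formula**; a `d`-set of rows is represented by its increasing enumeration. -/
theorem Matrix.det_mul_eq_sum_strictMono (A : Matrix (Fin d) m R) (B : Matrix m (Fin d) R) :
    (A * B).det = ∑ g with StrictMono g, (A.submatrix id g).det * (B.submatrix g id).det := by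
  have hnoninj : ∀ f ∈ ({f | ¬ Injective f} : Finset (Fin d → m)),
      (∏ j, A j (f j)) * (B.submatrix f id).det = 0 := by
    intro f hf
    obtain ⟨a, b, hab, hne⟩ : ∃ a b, f a = f b ∧ a ≠ b := by
      simpa [Injective] using (mem_filter.mp hf).2
    rw [det_zero_of_row_eq hne (by ext; simp [hab]), mul_zero]
  rw [det_mul_eq_sum_prod_mul_det, ← sum_filter_add_sum_filter_not _ Injective,
    sum_eq_zero hnoninj, add_zero, sum_injective_eq_sum_strictMono_sum_perm]
  exact sum_congr rfl fun g _ => sum_perm_prod_mul_det_submatrix_comp A B g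

theorem Matrix.det_transpose_mul_self_eq_sum_strictMono (X : Matrix m (Fin d) R) :
    (Xᵀ * X).det = ∑ g with StrictMono g, (X.submatrix g id).det ^ 2 := by
  rw [det_mul_eq_sum_strictMono]
  exact sum_congr rfl fun g _ => by rw [← transpose_submatrix, det_transpose, sq]

end CauchyBinet

theorem Matrix.det_sub_vecMulVec {R : Type*} [CommRing R] {m : Type*} [Fintype m]
    [DecidableEq m] {A : Matrix m m R} (hA : IsUnit A.det) (u v : m → R) :
    (A - vecMulVec u v).det = A.det * (1 - v ⬝ᵥ A⁻¹ *ᵥ u) := by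
  rw [sub_eq_add_neg, ← neg_vecMulVec, vecMulVec_eq Unit,
    det_add_replicateCol_mul_replicateRow hA, det_unique (1 + _), Matrix.add_apply, one_apply_eq,
    Matrix.mul_assoc, ← replicateCol_mulVec, replicateRow_mul_replicateCol_apply, mulVec_neg,
    dotProduct_neg, ← sub_eq_add_neg]

theorem Matrix.isUnit_of_rank_eq_card {K : Type*} [Field K] {m : Type*} [Fintype m]
    [DecidableEq m] {A : Matrix m m K} (hA : A.rank = Fintype.card m) : IsUnit A := by
  rw [← mulVec_surjective_iff_isUnit, ← coe_mulVecLin, ← LinearMap.range_eq_top]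
  apply Submodule.eq_top_of_finrank_eq
  rw [← rank, hA, Module.finrank_fintype_fun_eq_card]

theorem Nat.choose_sub_one_mul {N : ℕ} (hN : 0 < N) (k : ℕ) :
    (N - 1).choose k * N = N.choose k * (N - k) := by
  obtain ⟨M, rfl⟩ := Nat.exists_eq_add_one_of_ne_zero hN.ne'
  simpa using Nat.choose_mul_succ_eq M k

theorem Finset.powersetCard_compl_singleton {α : Type*} [Fintype α] [DecidableEq α] (s : ℕ)
    (i : α) : powersetCard s {i}ᶜ = (powersetCard s univ).filter (i ∉ ·) := by
  ext S
  simp [mem_powersetCard, subset_compl_singleton, and_comm]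

section Gram

variable {n d : ℕ}

theorem gram_apply (X : Matrix (Fin n) (Fin d) ℝ) (S : Finset (Fin n)) (a b : Fin d) :
    gram X S a b = ∑ j ∈ S, X j a * X j b := by
  simp only [_root_.gram, rowSub, mul_apply, transpose_apply, submatrix_apply, id_eq]
  exact sum_coe_sort S fun j => X j a * X j b

theorem gram_univ (X : Matrix (Fin n) (Fin d) ℝ) : gram X univ = Xᵀ * X := by
  ext a b
  simp [gram_apply, mul_apply]

theorem gram_compl_singleton (X : Matrix (Fin n) (Fin d) ℝ) (i : Fin n) :
    gram X {i}ᶜ = Xᵀ * X - vecMulVec (X i) (X i) := by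
  ext a b
  rw [Matrix.sub_apply, ← gram_univ, gram_apply, gram_apply, vecMulVec_apply,
    ← sum_compl_add_sum {i}, sum_singleton, add_sub_cancel_right]

theorem det_gram_eq_sum_strictMono (X : Matrix (Fin n) (Fin d) ℝ) (S : Finset (Fin n)) :
    (gram X S).det = ∑ g with StrictMono g ∧ univ.image g ⊆ S, (X.submatrix g id).det ^ 2 := by
  -- zeroing the rows outside `S` keeps the row type `Fin n` and does not change the Gram matrix
  set Y : Matrix (Fin n) (Fin d) ℝ := of fun j k => if j ∈ S then X j k else 0
  have hY : gram X S = Yᵀ * Y := by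
    ext a b
    simp [Y, gram_apply, mul_apply, sum_ite_mem]
  rw [hY, det_transpose_mul_self_eq_sum_strictMono, ← filter_filter,
    sum_filter (fun g => univ.image g ⊆ S)]
  refine sum_congr rfl fun g _ => ?_
  split_ifs with hg
  · congr 2
    ext j k
    simp [Y, hg (mem_image_of_mem g (mem_univ j))]
  · obtain ⟨j, hj⟩ : ∃ j, g j ∉ S := by simpa [subset_iff] using hg
    rw [det_eq_zero_of_row_eq_zero j (by simp [Y, hj]), zero_pow two_ne_zero]

theorem sum_powersetCard_det_gram (X : Matrix (Fin n) (Fin d) ℝ) (U : Finset (Fin n)) {s : ℕ}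
    (hds : d ≤ s) :
    ∑ S ∈ powersetCard s U, (gram X S).det = (#U - d).choose (s - d) * (gram X U).det := by
  simp only [det_gram_eq_sum_strictMono]
  rw [sum_comm' (s' := fun g => (powersetCard s U).filter (univ.image g ⊆ ·))
    (t' := {g | StrictMono g ∧ univ.image g ⊆ U}), mul_sum]
  · refine sum_congr rfl fun g hg => ?_
    have hcard : #(univ.image g) = d := by
      rw [card_image_of_injective _ (mem_filter.mp hg).2.1.injective, card_univ, Fintype.card_fin]
    rw [sum_const, card_filter_powersetCard_subset _ _ _ (mem_filter.mp hg).2.2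
      (hcard.trans_le hds), hcard, nsmul_eq_mul]
  · intro S g
    simp only [mem_powersetCard, mem_filter, mem_univ, true_and]
    constructor
    · rintro ⟨⟨hSU, hS⟩, hg, hgS⟩
      exact ⟨⟨⟨hSU, hS⟩, hgS⟩, hg, hgS.trans hSU⟩
    · rintro ⟨⟨⟨hSU, hS⟩, hgS⟩, hg, -⟩
      exact ⟨⟨hSU, hS⟩, hg, hgS⟩

end Gram

/-- The marginal probability of index `i` under size-`s` volume sampling:
`P(i ∈ S) = (s−d)/(n−d) + ((n−s)/(n−d)) · x_i^⊤(X^⊤X)^{−1}x_i`. -/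
theorem volume_sampling_marginal {n d : ℕ} (X : Matrix (Fin n) (Fin d) ℝ)
    (hrank : X.rank = d) (hdn : d < n) (s : ℕ) (hds : d ≤ s) (hsn : s ≤ n)
    (i : Fin n) :
    ∑ S ∈ (Finset.powersetCard s (Finset.univ : Finset (Fin n))).filter (fun S => i ∈ S),
        (gram X S).det / (((n - d).choose (s - d) : ℝ) * (Xᵀ * X).det)
      = ((s : ℝ) - d) / ((n : ℝ) - d)
        + (((n : ℝ) - s) / ((n : ℝ) - d)) * (X i ⬝ᵥ (Xᵀ * X)⁻¹.mulVec (X i)) := by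
  have hunit : IsUnit (Xᵀ * X).det := (isUnit_iff_isUnit_det _).mp <|
    isUnit_of_rank_eq_card (by rw [rank_transpose_mul_self, hrank, Fintype.card_fin])
  have hmass_univ := sum_powersetCard_det_gram X univ hds
  rw [gram_univ, card_univ, Fintype.card_fin] at hmass_univ
  have hmass_avoid := sum_powersetCard_det_gram X {i}ᶜ hds
  rw [gram_compl_singleton, det_sub_vecMulVec hunit, card_compl, card_singleton,
    Fintype.card_fin, powersetCard_compl_singleton] at hmass_avoid
  rw [← sum_filter_add_sum_filter_not _ (i ∈ ·), hmass_avoid] at hmass_univ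
  have hchoose : ((n - 1 - d).choose (s - d) : ℝ) * (n - d) = (n - d).choose (s - d) * (n - s) := by
    have h := Nat.choose_sub_one_mul (Nat.sub_pos_of_lt hdn) (s - d)
    rw [Nat.sub_right_comm, Nat.sub_sub_sub_cancel_right hds] at h
    rw [← Nat.cast_sub hdn.le, ← Nat.cast_sub hsn]
    exact_mod_cast h
  have hnd : (n : ℝ) - d ≠ 0 := sub_ne_zero.mpr (by exact_mod_cast hdn.ne')
  have hC : ((n - d).choose (s - d) : ℝ) ≠ 0 := by
    exact_mod_cast (Nat.choose_pos (Nat.sub_le_sub_right hsn d)).ne'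
  set ℓ := X i ⬝ᵥ (Xᵀ * X)⁻¹ *ᵥ X i
  rw [← sum_div, div_eq_iff (mul_ne_zero hC hunit.ne_zero)]
  field_simp
  linear_combination (↑n - ↑d) * hmass_univ - (Xᵀ * X).det * (1 - ℓ) * hchoose
end
end

section
/- Let X ∈ ℝ^{n×d} be full rank, d ≤ s ≤ n, and assume det(X_S^⊤X_S) > 0 for every size-s subset S (full support). If S is drawn by size-s volume sampling, then E[(X_S^⊤X_S)^{−1}] = ((n−d+1)/(s−d+1)) · (X^⊤X)^{−1} as a matrix identity. Without the full-support assumption, the equality weakens to the positive-semidefinite inequality E[(X_S^⊤X_S)^{−1}] ⪯ ((n−d+1)/(s−d+1))(X^⊤X)^{−1}. -/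
open Matrix Finset

noncomputable section

/-- The four Penrose conditions characterizing the Moore–Penrose pseudoinverse. -/
def IsMoorePenrose {m p : Type*} [Fintype m] [Fintype p]
    (A : Matrix m p ℝ) (B : Matrix p m ℝ) : Prop :=
  A * B * A = A ∧ B * A * B = B ∧ (A * B)ᵀ = A * B ∧ (B * A)ᵀ = B * A

/-- The Moore–Penrose pseudoinverse `A⁺` of a real matrix. -/
def pinv {m p : Type*} [Fintype m] [Fintype p] (A : Matrix m p ℝ) : Matrix p m ℝ := by
  classical exact if h : ∃ B, IsMoorePenrose A B then h.choose else 0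

/-- The diagonal 0/1 selection matrix `I_S`. -/
def sel {n : ℕ} (S : Finset (Fin n)) : Matrix (Fin n) (Fin n) ℝ :=
  Matrix.diagonal (fun i => if i ∈ S then 1 else 0)

/-!
Write `G_S = Xᵀ I_S X`. Cauchy–Binet, applied to the `(d-1)`-minors that make up the adjugate,
gives `adj G_S = ∑_{T ⊆ S, #T = d-1} c_T c_Tᵀ`, where `c_T` collects the signed maximal minors
of the rows `T` of `X` with one column deleted. Each such `T` lies in `C(n-d+1, s-d+1)` sets `S`
of size `s`, so `∑_S adj G_S = C(n-d+1, s-d+1) adj (XᵀX)`, and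
`C(n-d+1, s-d+1) / C(n-d, s-d) = (n-d+1)/(s-d+1)`.
Finally `det G_S • G_S⁻¹` equals `adj G_S` when `G_S` is invertible and `0` otherwise, while
`adj G_S ⪰ 0` by the same formula; this gives the identity under full support and the Loewner
inequality in general.
-/

namespace Finset

theorem sum_perm_comp_orderEmbOfFin {ι M : Type*} [Fintype ι] [LinearOrder ι] [AddCommMonoid M]
    {e : ℕ} (T : Finset ι) (h : #T = e) (g : (Fin e → ι) → M) :
    ∑ σ : Equiv.Perm (Fin e), g (T.orderEmbOfFin h ∘ σ)
      = ∑ p : Fin e → ι with p.Injective ∧ univ.image p = T, g p := by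
  refine sum_bij (fun σ _ => T.orderEmbOfFin h ∘ σ) (fun σ _ => ?_) (fun σ _ τ _ hστ => ?_)
    (fun p hp => ?_) (fun _ _ => rfl)
  · refine mem_filter.2 ⟨mem_univ _, (T.orderEmbOfFin h).injective.comp σ.injective, ?_⟩
    rw [← image_image, image_univ_equiv, image_orderEmbOfFin_univ]
  · ext k
    exact congrArg Fin.val ((T.orderEmbOfFin h).injective (congrFun hστ k))
  · obtain ⟨hinj, himage⟩ := (mem_filter.1 hp).2
    have hmem : ∀ k, p k ∈ T := fun k => himage ▸ mem_image_of_mem p (mem_univ k)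
    let σ : Fin e → Fin e := fun k => (T.orderIsoOfFin h).symm ⟨p k, hmem k⟩
    have hσ : σ.Injective := fun a b hab => hinj (by simpa [σ] using hab)
    refine ⟨Equiv.ofBijective σ (Finite.injective_iff_bijective.1 hσ), mem_univ _, ?_⟩
    ext k
    simp [σ, ← coe_orderIsoOfFin_apply]

end Finset

namespace Matrix

section CauchyBinet

open Equiv

variable {ι R : Type*} [CommRing R] {e : ℕ}

theorem det_submatrix_eq_zero_of_not_injective (A : Matrix ι (Fin e) R) {p : Fin e → ι}
    (hp : ¬ p.Injective) : (A.submatrix p id).det = 0 := by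
  obtain ⟨i, j, hpij, hij⟩ : ∃ i j, p i = p j ∧ i ≠ j := by
    simpa [Function.Injective] using hp
  exact det_zero_of_row_eq hij (by ext; simp [hpij])

theorem sum_perm_det_submatrix_comp (A B : Matrix ι (Fin e) R) (f : Fin e → ι) :
    ∑ σ : Perm (Fin e), (A.submatrix (f ∘ σ) id).det * ∏ i, B (f (σ i)) i
      = (A.submatrix f id).det * (B.submatrix f id).det := by
  simp only [det_apply' (B.submatrix f id), mul_sum, submatrix_apply, id_eq]
  refine sum_congr rfl fun σ _ => ?_
  rw [show A.submatrix (f ∘ σ) id = (A.submatrix f id).submatrix σ id from rfl, det_permute]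
  ring

variable [Fintype ι]

theorem det_transpose_mul_eq_sum_det_submatrix_mul_prod (A B : Matrix ι (Fin e) R) :
    (Aᵀ * B).det = ∑ p : Fin e → ι, (A.submatrix p id).det * ∏ i, B (p i) i := by
  have hA : ∀ p : Fin e → ι,
      (A.submatrix p id).det = ∑ σ : Perm (Fin e), Perm.sign σ * ∏ i, A (p i) (σ i) :=
    fun p => by rw [← det_transpose, det_apply']; rfl
  simp only [hA, det_apply', mul_apply, transpose_apply, prod_univ_sum, Fintype.piFinset_univ,
    mul_sum, sum_mul, prod_mul_distrib, mul_assoc]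
  exact sum_comm

variable [LinearOrder ι]

def rowMinor (A : Matrix ι (Fin e) R) (T : Finset ι) : R :=
  if h : #T = e then (A.submatrix (T.orderEmbOfFin h) id).det else 0

theorem det_transpose_mul_eq_sum_rowMinor (A B : Matrix ι (Fin e) R) :
    (Aᵀ * B).det = ∑ T ∈ powersetCard e univ, rowMinor A T * rowMinor B T := by
  classical
  set F : (Fin e → ι) → R := fun p => (A.submatrix p id).det * ∏ i, B (p i) i
  have hmaps : ∀ p ∈ ({p | p.Injective} : Finset (Fin e → ι)),
      univ.image p ∈ powersetCard e univ := fun p hp =>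
    mem_powersetCard_univ.2 (by rw [card_image_of_injective _ (mem_filter.1 hp).2]; simp)
  calc (Aᵀ * B).det = ∑ p, F p := det_transpose_mul_eq_sum_det_submatrix_mul_prod A B
    _ = ∑ p with p.Injective, F p := by
      refine (sum_subset (filter_subset _ _) fun p _ hp => ?_).symm
      simp [F, det_submatrix_eq_zero_of_not_injective A (by simpa using hp)]
    _ = ∑ T ∈ powersetCard e univ, ∑ p with p.Injective ∧ univ.image p = T, F p := by
      rw [← sum_fiberwise_of_maps_to hmaps]
      simp only [filter_filter]
    _ = _ := by
      refine sum_congr rfl fun T hT => ?_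
      have h := mem_powersetCard_univ.1 hT
      rw [← sum_perm_comp_orderEmbOfFin T h, rowMinor, rowMinor, dif_pos h, dif_pos h]
      exact sum_perm_det_submatrix_comp A B _

theorem rowMinor_diagonal_mul (w : ι → R) (B : Matrix ι (Fin e) R) {T : Finset ι}
    (hT : #T = e) : rowMinor (diagonal w * B) T = (∏ t ∈ T, w t) * rowMinor B T := by
  have hsub : (diagonal w * B).submatrix (T.orderEmbOfFin hT) id
      = diagonal (w ∘ T.orderEmbOfFin hT) * B.submatrix (T.orderEmbOfFin hT) id := by
    ext; simp [diagonal_mul]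
  rw [rowMinor, rowMinor, dif_pos hT, dif_pos hT, hsub, det_mul, det_diagonal]
  congr 1
  conv_rhs => rw [← map_orderEmbOfFin_univ T hT, prod_map]
  rfl

theorem det_transpose_mul_diagonal_mul (w : ι → R) (A B : Matrix ι (Fin e) R) :
    (Aᵀ * diagonal w * B).det
      = ∑ T ∈ powersetCard e univ, (∏ t ∈ T, w t) * (rowMinor A T * rowMinor B T) := by
  rw [Matrix.mul_assoc, det_transpose_mul_eq_sum_rowMinor]
  refine sum_congr rfl fun T hT => ?_
  rw [rowMinor_diagonal_mul w B (mem_powersetCard_univ.1 hT)]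
  ring

def signedMinors (X : Matrix ι (Fin (e + 1)) R) (T : Finset ι) : Fin (e + 1) → R :=
  fun i => (-1) ^ (i : ℕ) * rowMinor (X.submatrix id i.succAbove) T

theorem adjugate_transpose_mul_diagonal_mul (w : ι → R) (X : Matrix ι (Fin (e + 1)) R) :
    adjugate (Xᵀ * diagonal w * X) = ∑ T ∈ powersetCard e univ,
      (∏ t ∈ T, w t) • vecMulVec (signedMinors X T) (signedMinors X T) := by
  ext i j
  have hsub : (Xᵀ * diagonal w * X).submatrix j.succAbove i.succAbove
      = (X.submatrix id j.succAbove)ᵀ * diagonal w * X.submatrix id i.succAbove := by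
    ext; simp [mul_apply]
  rw [adjugate_fin_succ_eq_det_submatrix, hsub, det_transpose_mul_diagonal_mul, mul_sum,
    sum_apply]
  refine sum_congr rfl fun T _ => ?_
  simp only [smul_apply, vecMulVec_apply, signedMinors, smul_eq_mul, pow_add]
  ring

theorem adjugate_transpose_mul_self (X : Matrix ι (Fin (e + 1)) R) :
    adjugate (Xᵀ * X)
      = ∑ T ∈ powersetCard e univ, vecMulVec (signedMinors X T) (signedMinors X T) := by
  simpa using adjugate_transpose_mul_diagonal_mul (1 : ι → R) X

theorem posSemidef_adjugate_transpose_mul_diagonal_mul {w : ι → ℝ} (hw : 0 ≤ w)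
    (X : Matrix ι (Fin (e + 1)) ℝ) : (adjugate (Xᵀ * diagonal w * X)).PosSemidef := by
  rw [adjugate_transpose_mul_diagonal_mul]
  refine posSemidef_sum _ fun T _ => ?_
  simpa using (posSemidef_vecMulVec_self_star (signedMinors X T)).smul
    (prod_nonneg fun t _ => hw t)

end CauchyBinet

theorem det_smul_inv_eq_adjugate {m R : Type*} [Fintype m] [DecidableEq m] [CommRing R]
    {A : Matrix m m R} (h : IsUnit A.det) : A.det • A⁻¹ = adjugate A := by
  rw [inv_def, smul_smul, Ring.mul_inverse_cancel _ h, one_smul]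

theorem posSemidef_adjugate_sub_det_smul_inv {m : Type*} [Fintype m] [DecidableEq m]
    {A : Matrix m m ℝ} (hA : (adjugate A).PosSemidef) :
    (adjugate A - A.det • A⁻¹).PosSemidef := by
  by_cases h : IsUnit A.det
  · simpa [det_smul_inv_eq_adjugate h] using PosSemidef.zero
  · simpa [nonsing_inv_apply_not_isUnit A h] using hA

end Matrix

theorem cast_choose_sub_add_one_eq_div_mul {n s d : ℕ} (hds : d ≤ s) (hsn : s ≤ n) :
    ((n - d + 1).choose (s - d + 1) : ℝ)
      = ((n : ℝ) - d + 1) / ((s : ℝ) - d + 1) * (n - d).choose (s - d) := by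
  have hs : (0 : ℝ) < s - d + 1 := by
    have : (d : ℝ) ≤ s := by exact_mod_cast hds
    linarith
  rw [div_mul_eq_mul_div, eq_div_iff hs.ne']
  have key : ((n - d + 1 : ℕ) : ℝ) * (n - d).choose (s - d)
      = (n - d + 1).choose (s - d + 1) * ((s - d + 1 : ℕ) : ℝ) := by
    exact_mod_cast Nat.add_one_mul_choose_eq (n - d) (s - d)
  push_cast [Nat.cast_sub hds, Nat.cast_sub (hds.trans hsn)] at key
  linarith

section VolumeSampling

variable {n e : ℕ}

theorem gram_eq_transpose_mul_sel_mul {d : ℕ} (X : Matrix (Fin n) (Fin d) ℝ)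
    (S : Finset (Fin n)) : gram X S = Xᵀ * sel S * X := by
  ext a b
  simp only [_root_.gram, rowSub, sel, mul_apply, transpose_apply, diagonal_apply, mul_ite,
    mul_one, mul_zero, ite_mul, zero_mul, sum_ite_eq', mem_univ, if_true]
  rw [← sum_filter, filter_mem_eq_inter, univ_inter]
  exact sum_coe_sort S fun i => X i a * X i b

theorem posSemidef_adjugate_gram (X : Matrix (Fin n) (Fin (e + 1)) ℝ) (S : Finset (Fin n)) :
    (adjugate (gram X S)).PosSemidef := by
  rw [gram_eq_transpose_mul_sel_mul]
  exact posSemidef_adjugate_transpose_mul_diagonal_mul (fun i => by positivity) X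

theorem sum_adjugate_gram (X : Matrix (Fin n) (Fin (e + 1)) ℝ) {s : ℕ} (hes : e ≤ s) :
    ∑ S ∈ powersetCard s univ, adjugate (gram X S)
      = ((n - e).choose (s - e) : ℝ) • adjugate (Xᵀ * X) := by
  simp only [gram_eq_transpose_mul_sel_mul, sel, adjugate_transpose_mul_self,
    adjugate_transpose_mul_diagonal_mul, prod_boole, smul_sum]
  rw [sum_comm]
  refine sum_congr rfl fun T hT => ?_
  have hcard := mem_powersetCard_univ.1 hT
  rw [← sum_smul]
  congr 1
  simp only [sum_boole, ← subset_iff]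
  rw [card_filter_powersetCard_subset T univ s (subset_univ T) (hcard ▸ hes), hcard, card_univ,
    Fintype.card_fin]

end VolumeSampling

theorem volume_sampling_second_moment_general {n d : ℕ} (X : Matrix (Fin n) (Fin d) ℝ)
    (s : ℕ) (hds : d ≤ s) (hsn : s ≤ n) :
    ((∀ S ∈ Finset.powersetCard s (Finset.univ : Finset (Fin n)), 0 < (gram X S).det) →
      ∑ S ∈ Finset.powersetCard s (Finset.univ : Finset (Fin n)),
          ((gram X S).det / (((n - d).choose (s - d) : ℝ) * (Xᵀ * X).det)) • (gram X S)⁻¹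
        = ((((n : ℝ) - d + 1) / ((s : ℝ) - d + 1)) • (Xᵀ * X)⁻¹ : Matrix (Fin d) (Fin d) ℝ))
    ∧ (((((n : ℝ) - d + 1) / ((s : ℝ) - d + 1)) • (Xᵀ * X)⁻¹
        - ∑ S ∈ Finset.powersetCard s (Finset.univ : Finset (Fin n)),
            ((gram X S).det / (((n - d).choose (s - d) : ℝ) * (Xᵀ * X).det)) •
              (gram X S)⁻¹).PosSemidef) := by
  obtain _ | e := d
  · refine ⟨fun _ => Subsingleton.elim _ _, ?_⟩
    convert PosSemidef.zero (n := Fin 0) (R := ℝ)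
    exact Subsingleton.elim _ _
  set C : ℝ := ((n - (e + 1)).choose (s - (e + 1)) : ℝ) with hC_def
  set D : ℝ := (Xᵀ * X).det with hD_def
  have hC : 0 < C := Nat.cast_pos.2 (Nat.choose_pos (by omega))
  have hD : 0 ≤ D := by simpa using (posSemidef_conjTranspose_mul_self X).det_nonneg
  have hscalar : ((n : ℝ) - ↑(e + 1) + 1) / ((s : ℝ) - ↑(e + 1) + 1) * D⁻¹
      = (C * D)⁻¹ * (n - e).choose (s - e) := by
    rw [show n - e = n - (e + 1) + 1 by omega, show s - e = s - (e + 1) + 1 by omega,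
      cast_choose_sub_add_one_eq_div_mul hds hsn, ← hC_def, mul_inv]
    field_simp
  have hrhs : (((n : ℝ) - ↑(e + 1) + 1) / ((s : ℝ) - ↑(e + 1) + 1)) • (Xᵀ * X)⁻¹
      = (C * D)⁻¹ • ∑ S ∈ powersetCard s univ, adjugate (gram X S) := by
    rw [sum_adjugate_gram X (by omega), Matrix.inv_def, Ring.inverse_eq_inv', ← hD_def,
      smul_smul, smul_smul, hscalar]
  have hlhs : ∑ S ∈ powersetCard s univ, ((gram X S).det / (C * D)) • (gram X S)⁻¹
      = (C * D)⁻¹ • ∑ S ∈ powersetCard s univ, (gram X S).det • (gram X S)⁻¹ := by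
    rw [smul_sum]
    exact sum_congr rfl fun S _ => by rw [smul_smul, div_eq_inv_mul]
  rw [hlhs, hrhs]
  refine ⟨fun hfull => ?_, ?_⟩
  · exact congrArg _ (sum_congr rfl fun S hS => det_smul_inv_eq_adjugate (hfull S hS).ne'.isUnit)
  · rw [← smul_sub, ← sum_sub_distrib]
    exact (posSemidef_sum _ fun S _ => posSemidef_adjugate_sub_det_smul_inv
      (posSemidef_adjugate_gram X S)).smul (by positivity)

/-- Second moment of volume sampling: under full support,
`E[(X_S^⊤X_S)^{−1}] = ((n−d+1)/(s−d+1)) (X^⊤X)^{−1}`; in general the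
positive-semidefinite (Loewner) inequality `⪯` holds. -/
theorem volume_sampling_second_moment {n d : ℕ} (X : Matrix (Fin n) (Fin d) ℝ)
    (hrank : X.rank = d) (hdn : d ≤ n) (s : ℕ) (hds : d ≤ s) (hsn : s ≤ n) :
    ((∀ S ∈ Finset.powersetCard s (Finset.univ : Finset (Fin n)), 0 < (gram X S).det) →
      ∑ S ∈ Finset.powersetCard s (Finset.univ : Finset (Fin n)),
          ((gram X S).det / (((n - d).choose (s - d) : ℝ) * (Xᵀ * X).det)) • (gram X S)⁻¹
        = ((((n : ℝ) - d + 1) / ((s : ℝ) - d + 1)) • (Xᵀ * X)⁻¹ : Matrix (Fin d) (Fin d) ℝ))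
    ∧ (((((n : ℝ) - d + 1) / ((s : ℝ) - d + 1)) • (Xᵀ * X)⁻¹
        - ∑ S ∈ Finset.powersetCard s (Finset.univ : Finset (Fin n)),
            ((gram X S).det / (((n - d).choose (s - d) : ℝ) * (Xᵀ * X).det)) •
              (gram X S)⁻¹).PosSemidef) :=
  volume_sampling_second_moment_general X s hds hsn
end
end

section
/- Let X ∈ ℝ^{n×d} be full rank and d ≤ s < t ≤ n. Consider the hierarchical procedure: first sample T of size t by volume sampling from X, then sample S of size s by volume sampling from X_T. Then the resulting S is distributed according to size-s volume sampling from X, i.e., P(S) = det(X_S^⊤X_S)/((n−d choose s−d) det(X^⊤X)). -/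
open Matrix Finset

noncomputable section

/-!
If `det (X_Sᵀ X_S) = 0` both sides vanish. Otherwise `X_S` has trivial kernel, hence so has
`X_T` for every `T ⊇ S`; the factor `det (X_Tᵀ X_T)` then cancels in every summand, which makes
the sum `C(n-s, t-s)` (the number of `t`-sets containing `S`) copies of one term, and the
identity `C(n-d, t-d) C(t-d, s-d) = C(n-d, s-d) C(n-s, t-s)` finishes the computation.
-/

theorem Matrix.det_transpose_mul_self_ne_zero_iff {m n R : Type*} [Fintype m] [Fintype n]
    [DecidableEq n] [Field R] [LinearOrder R] [IsStrictOrderedRing R] (A : Matrix m n R) :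
    (Aᵀ * A).det ≠ 0 ↔ Function.Injective A.mulVec := by
  rw [← isUnit_iff_ne_zero, ← isUnit_iff_isUnit_det, ← mulVec_injective_iff_isUnit,
    ← coe_mulVecLin, ← LinearMap.ker_eq_bot, ker_mulVecLin_transpose_mul_self,
    LinearMap.ker_eq_bot, coe_mulVecLin]

theorem Matrix.mulVec_injective_of_submatrix {l m n R : Type*} [Fintype n] [Semiring R]
    {A : Matrix m n R} (f : l → m) (h : Function.Injective (A.submatrix f id).mulVec) :
    Function.Injective A.mulVec :=
  fun _ _ hvw => h (funext fun i => congrFun hvw (f i))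

theorem det_gram_ne_zero_of_subset {n d : ℕ} (X : Matrix (Fin n) (Fin d) ℝ)
    {S T : Finset (Fin n)} (hST : S ⊆ T) (hS : (gram X S).det ≠ 0) : (gram X T).det ≠ 0 := by
  rw [_root_.gram, det_transpose_mul_self_ne_zero_iff] at hS ⊢
  exact mulVec_injective_of_submatrix (Set.inclusion hST) hS

theorem Finset.card_filter_superset_powersetCard {α : Type*} [DecidableEq α] {S U : Finset α}
    {t : ℕ} (hSU : S ⊆ U) (ht : #S ≤ t) :
    #{T ∈ powersetCard t U | S ⊆ T} = (#U - #S).choose (t - #S) := by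
  rw [← card_sdiff_of_subset hSU, ← card_powersetCard]
  refine card_bij' (fun T _ => T \ S) (fun T _ => T ∪ S) ?_ ?_ ?_ ?_
  · intro T hT
    simp only [mem_filter, mem_powersetCard] at hT ⊢
    refine ⟨sdiff_subset_sdiff hT.1.1 le_rfl, ?_⟩
    rw [card_sdiff_of_subset hT.2, hT.1.2]
  · intro T hT
    simp only [mem_filter, mem_powersetCard, subset_sdiff] at hT ⊢
    refine ⟨⟨union_subset hT.1.1 hSU, ?_⟩, subset_union_right⟩
    rw [card_union_of_disjoint hT.1.2, hT.2]
    omega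
  · intro T hT
    exact sdiff_union_of_subset (mem_filter.1 hT).2
  · intro T hT
    simp only [mem_powersetCard, subset_sdiff] at hT
    exact union_sdiff_cancel_right hT.1.2

theorem Nat.choose_sub_mul_choose_sub {n t s d : ℕ} (hds : d ≤ s) (hst : s ≤ t) :
    (n - d).choose (t - d) * (t - d).choose (s - d) =
      (n - d).choose (s - d) * (n - s).choose (t - s) := by
  rw [Nat.choose_mul (by omega), Nat.sub_sub_sub_cancel_right hds,
    Nat.sub_sub_sub_cancel_right hds]

theorem div_mul_div_mul_cancel_right {K : Type*} [Field K] {c : K} (hc : c ≠ 0) (a b u : K) :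
    c / a * (b / (u * c)) = b / (a * u) := by
  field_simp

theorem volume_sampling_composition_general {n d : ℕ} (X : Matrix (Fin n) (Fin d) ℝ)
    (s t : ℕ) (hds : d ≤ s) (hst : s < t) (htn : t ≤ n)
    (S : Finset (Fin n)) (hS : S.card = s) :
    ∑ T ∈ (Finset.powersetCard t (Finset.univ : Finset (Fin n))).filter (fun T => S ⊆ T),
        ((gram X T).det / (((n - d).choose (t - d) : ℝ) * (Xᵀ * X).det)) *
          ((gram X S).det / (((t - d).choose (s - d) : ℝ) * (gram X T).det))
      = (gram X S).det / (((n - d).choose (s - d) : ℝ) * (Xᵀ * X).det) := by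
  by_cases hSdet : (gram X S).det = 0
  · simp [hSdet]
  have hterm : ∀ T ∈ (powersetCard t (univ : Finset (Fin n))).filter (fun T => S ⊆ T),
      (gram X T).det / (((n - d).choose (t - d) : ℝ) * (Xᵀ * X).det) *
          ((gram X S).det / (((t - d).choose (s - d) : ℝ) * (gram X T).det))
        = (gram X S).det /
            (((n - d).choose (t - d) : ℝ) * (Xᵀ * X).det * ((t - d).choose (s - d) : ℝ)) :=
    fun T hT => div_mul_div_mul_cancel_right
      (det_gram_ne_zero_of_subset X (mem_filter.1 hT).2 hSdet) _ _ _
  have hcount := card_filter_superset_powersetCard (subset_univ S) (hS ▸ hst.le)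
  have hchoose : ((n - d).choose (t - d) : ℝ) * (t - d).choose (s - d) =
      (n - d).choose (s - d) * (n - s).choose (t - s) := by
    exact_mod_cast Nat.choose_sub_mul_choose_sub hds hst.le
  have hsupersets : ((n - s).choose (t - s) : ℝ) ≠ 0 := by
    exact_mod_cast (Nat.choose_pos (by omega)).ne'
  rw [sum_congr rfl hterm, sum_const, hcount, card_univ, Fintype.card_fin, hS, nsmul_eq_mul]
  calc _ = ((n - s).choose (t - s) : ℝ) * (gram X S).det /
        ((n - s).choose (t - s) * ((n - d).choose (s - d) * (Xᵀ * X).det)) := by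
        rw [mul_div_assoc']
        congr 1
        linear_combination (Xᵀ * X).det * hchoose
    _ = _ := mul_div_mul_left _ _ hsupersets

/-- Composition of volume sampling: sampling `T` of size `t` by volume sampling from `X`,
then `S` of size `s` by volume sampling from `X_T`, yields size-`s` volume sampling from `X`. -/
theorem volume_sampling_composition {n d : ℕ} (X : Matrix (Fin n) (Fin d) ℝ)
    (hrank : X.rank = d) (s t : ℕ) (hds : d ≤ s) (hst : s < t) (htn : t ≤ n)
    (S : Finset (Fin n)) (hS : S.card = s) :
    ∑ T ∈ (Finset.powersetCard t (Finset.univ : Finset (Fin n))).filter (fun T => S ⊆ T),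
        ((gram X T).det / (((n - d).choose (t - d) : ℝ) * (Xᵀ * X).det)) *
          ((gram X S).det / (((t - d).choose (s - d) : ℝ) * (gram X T).det))
      = (gram X S).det / (((n - d).choose (s - d) : ℝ) * (Xᵀ * X).det) :=
  volume_sampling_composition_general X s t hds hst htn S hS
end
end

section
/- Let X ∈ ℝ^{n×d} be in general position (every d×d submatrix of rows is nonsingular), and let y ∈ ℝ^n. Define L(w) = ‖Xw − y‖², w* = argmin_w L(w), and for a size-d subset S let w*(S) be the unique solution of X_S w = y_S. If S is drawn by size-d volume sampling (P(S) ∝ det(X_S)²), then E[L(w*(S))] = (d+1) · L(w*). If X is merely full rank (not in general position), the equality becomes the inequality E[L(w*(S))] ≤ (d+1) L(w*). -/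
open Matrix Finset

noncomputable section

/-- The total square loss `L(w) = ‖Xw − y‖²` over all `n` rows. -/
def loss {n d : ℕ} (X : Matrix (Fin n) (Fin d) ℝ) (y : Fin n → ℝ) (w : Fin d → ℝ) : ℝ :=
  ∑ j, (X.mulVec w j - y j) ^ 2

/-- The least squares solution `(X_S^⊤X_S)^{−1} X_S^⊤ y_S` of the subproblem `(X_S, y_S)`;
for `|S| = d` with `X_S` nonsingular this is the unique interpolating solution. -/
def subW {n d : ℕ} (X : Matrix (Fin n) (Fin d) ℝ) (y : Fin n → ℝ)
    (S : Finset (Fin n)) : Fin d → ℝ :=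
  (gram X S)⁻¹.mulVec ((rowSub X S)ᵀ.mulVec (fun i : {x // x ∈ S} => y i.1))

/-- The full least squares solution `w* = (X^⊤X)^{−1}X^⊤ y`. -/
def optW {n d : ℕ} (X : Matrix (Fin n) (Fin d) ℝ) (y : Fin n → ℝ) : Fin d → ℝ :=
  (Xᵀ * X)⁻¹.mulVec (Xᵀ.mulVec y)

/-!
Write `B = [X | y]`. When `X_S` is nonsingular the interpolant `w*(S)` fits every row of `S`, so
subtracting `X w*(S)` from the last column of the square matrix `B_{S ∪ {j}}` leaves the single
entry `y_j - x_jᵀ w*(S)`, and `det(X_S)² (x_jᵀ w*(S) - y_j)² = det(B_{S ∪ {j}})²`. Summed over `S`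
and `j ∉ S`, every `(d+1)`-subset `T` occurs `d + 1` times, and by Cauchy–Binet
`∑_T det(B_T)² = det(BᵀB)`. The same column operation with `w*`, which satisfies the normal
equations, turns `det(BᵀB)` into `det(XᵀX) L(w*)`. A singular `X_S` contributes nothing on the
left while its terms on the right are nonnegative, which gives the inequality.
-/

namespace Finset

variable {ι : Type*} [Fintype ι] [DecidableEq ι]

theorem sum_eq_sum_powersetCard_sum_subtype {κ M : Type*} [Fintype κ] [DecidableEq κ]
    [AddCommMonoid M] (F : (κ → ι) → M) (hF : ∀ p, ¬ Function.Injective p → F p = 0) :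
    ∑ p, F p
      = ∑ S ∈ powersetCard (Fintype.card κ) univ, ∑ q : κ → {i // i ∈ S}, F (fun a => (q a).1) := by
  have hfib : ∀ S ∈ powersetCard (Fintype.card κ) univ,
      ∑ q : κ → {i // i ∈ S}, F (fun a => (q a).1)
        = ∑ p, if univ.image p = S then F p else 0 := by
    intro S hS
    rw [mem_powersetCard_univ] at hS
    rw [← Fintype.sum_equiv (Equiv.subtypePiEquivPi (p := fun _ i => i ∈ S))
      (fun p => F p.1) _ (fun _ => rfl),
      ← sum_subtype (univ.filter fun p : κ → ι => ∀ a, p a ∈ S) (by simp), sum_filter]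
    refine sum_congr rfl fun p _ => ?_
    by_cases hp : Function.Injective p
    · have : (∀ a, p a ∈ S) ↔ univ.image p = S := by
        refine ⟨fun h => eq_of_subset_of_card_le (by simpa [subset_iff] using h) ?_,
          fun h a => h ▸ mem_image_of_mem p (mem_univ a)⟩
        rw [hS, card_image_of_injective _ hp, card_univ]
      simp only [this]
    · simp only [hF p hp, ite_self]
  rw [sum_congr rfl hfib, sum_comm]
  refine sum_congr rfl fun p _ => ?_
  rw [sum_ite_eq]
  by_cases hp : Function.Injective p
  · rw [if_pos (mem_powersetCard_univ.mpr (by rw [card_image_of_injective _ hp, card_univ]))]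
  · simp only [hF p hp, ite_self]

theorem sum_powersetCard_sum_compl_insert {M : Type*} [AddCommMonoid M] (d : ℕ)
    (G : Finset ι → M) :
    ∑ S ∈ powersetCard d univ, ∑ j ∈ Sᶜ, G (insert j S)
      = (d + 1) • ∑ T ∈ powersetCard (d + 1) univ, G T := by
  have hT : (d + 1) • ∑ T ∈ powersetCard (d + 1) univ, G T
      = ∑ T ∈ powersetCard (d + 1) univ, ∑ _j ∈ T, G T := by
    rw [smul_sum]
    exact sum_congr rfl fun T hT => by rw [sum_const, (mem_powersetCard_univ.mp hT)]
  rw [hT, sum_sigma', sum_sigma']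
  refine sum_nbij' (fun x => ⟨insert x.2 x.1, x.2⟩) (fun x => ⟨x.1.erase x.2, x.2⟩)
    ?_ ?_ ?_ ?_ fun _ _ => rfl
  · rintro ⟨S, j⟩ hx
    simp only [mem_sigma, mem_powersetCard_univ, mem_compl] at hx ⊢
    exact ⟨by rw [card_insert_of_notMem hx.2, hx.1], mem_insert_self _ _⟩
  · rintro ⟨T, j⟩ hx
    simp only [mem_sigma, mem_powersetCard_univ, mem_compl] at hx ⊢
    exact ⟨by rw [card_erase_of_mem hx.2, hx.1, Nat.add_sub_cancel], notMem_erase _ _⟩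
  · rintro ⟨S, j⟩ hx
    simp only [mem_sigma, mem_powersetCard_univ, mem_compl] at hx
    simp [erase_insert hx.2]
  · rintro ⟨T, j⟩ hx
    simp only [mem_sigma, mem_powersetCard_univ] at hx
    simp [insert_erase hx.2]

end Finset

namespace Matrix

section Gram

variable {ι κ : Type*} [Fintype ι] [Fintype κ] [DecidableEq κ]

theorem det_mul_eq_sum_det_submatrix_mul_prod {R : Type*} [CommRing R]
    (A : Matrix κ ι R) (B : Matrix ι κ R) :
    (A * B).det = ∑ p : κ → ι, (A.submatrix id p).det * ∏ b, B (p b) b := by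
  simp only [det_apply', mul_apply, prod_univ_sum, Finset.mul_sum, Fintype.piFinset_univ,
    Finset.sum_mul]
  rw [sum_comm]
  refine sum_congr rfl fun p _ => sum_congr rfl fun σ _ => ?_
  simp only [submatrix_apply, id, prod_mul_distrib]
  ring

theorem det_mul_eq_sum_det_submatrix [DecidableEq ι] {R : Type*} [CommRing R]
    (A : Matrix κ ι R) (B : Matrix ι κ R) :
    (A * B).det = ∑ S ∈ powersetCard (Fintype.card κ) univ,
      (A.submatrix id (fun i : {i // i ∈ S} => i.1) *
        B.submatrix (fun i : {i // i ∈ S} => i.1) id).det := by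
  rw [det_mul_eq_sum_det_submatrix_mul_prod, sum_eq_sum_powersetCard_sum_subtype]
  · refine sum_congr rfl fun S _ => ?_
    rw [det_mul_eq_sum_det_submatrix_mul_prod]
    rfl
  · intro p hp
    obtain ⟨a, b, hab, hne⟩ := Function.not_injective_iff.mp hp
    rw [det_zero_of_column_eq hne fun k => by simp [hab], zero_mul]

theorem det_transpose_mul_self_eq_sq {R : Type*} [CommRing R] (A : Matrix ι κ R) (e : κ ≃ ι) :
    (Aᵀ * A).det = (A.submatrix e id).det ^ 2 := by
  rw [← submatrix_id_id (Aᵀ * A), ← submatrix_mul_equiv Aᵀ A id e id, det_mul,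
    ← transpose_submatrix, det_transpose, sq]

theorem det_transpose_mul_self_nonneg (A : Matrix ι κ ℝ) : 0 ≤ (Aᵀ * A).det := by
  simpa [conjTranspose_eq_transpose_of_trivial] using
    (posSemidef_conjTranspose_mul_self A).det_nonneg

theorem isUnit_det_transpose_mul_self_of_rank_eq (A : Matrix ι κ ℝ)
    (hA : A.rank = Fintype.card κ) : IsUnit (Aᵀ * A).det := by
  rw [← isUnit_iff_isUnit_det, ← mulVec_surjective_iff_isUnit]
  have hrange : LinearMap.range (Aᵀ * A).mulVecLin = ⊤ := Submodule.eq_top_of_finrank_eq <| by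
    rw [← rank, rank_transpose_mul_self, hA, Module.finrank_fintype_fun_eq_card]
  exact LinearMap.range_eq_top.mp hrange

theorem transpose_mulVec_sub_mulVec_eq_zero {R : Type*} [CommRing R] (A : Matrix ι κ R)
    (v : ι → R) (hA : IsUnit (Aᵀ * A).det) :
    Aᵀ *ᵥ (v - A *ᵥ ((Aᵀ * A)⁻¹ *ᵥ (Aᵀ *ᵥ v))) = 0 := by
  rw [mulVec_sub, mulVec_mulVec, mulVec_mulVec, mul_nonsing_inv _ hA, one_mulVec, sub_self]

theorem eq_zero_of_transpose_mulVec_eq_zero {K : Type*} [Field K] (A : Matrix ι κ K)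
    (e : κ ≃ ι) (hA : (Aᵀ * A).det ≠ 0) {r : ι → K} (hr : Aᵀ *ᵥ r = 0) : r = 0 := by
  have hdet : (A.submatrix e id)ᵀ.det ≠ 0 := by
    rw [det_transpose]
    exact fun h => hA (by rw [det_transpose_mul_self_eq_sq A e, h, zero_pow two_ne_zero])
  have hre : r ∘ e = 0 := eq_zero_of_mulVec_eq_zero hdet <| by
    simp [transpose_submatrix, submatrix_mulVec_equiv, Function.comp_assoc, hr]
  ext i
  simpa using congrFun hre (e.symm i)

end Gram

section Augment

variable {ι ι' R : Type*} {k : ℕ}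

def augment (A : Matrix ι (Fin k) R) (v : ι → R) : Matrix ι (Fin (k + 1)) R :=
  of fun i => Fin.snoc (A i) (v i)

@[simp]
theorem augment_apply_castSucc (A : Matrix ι (Fin k) R) (v : ι → R) (i : ι) (j : Fin k) :
    augment A v i j.castSucc = A i j := by
  simp [augment]

@[simp]
theorem augment_apply_last (A : Matrix ι (Fin k) R) (v : ι → R) (i : ι) :
    augment A v i (Fin.last k) = v i := by
  simp [augment]

theorem submatrix_augment (A : Matrix ι (Fin k) R) (v : ι → R) (f : ι' → ι) :
    (augment A v).submatrix f id = augment (A.submatrix f id) (v ∘ f) :=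
  rfl

variable [CommRing R]

theorem mul_augment [Fintype ι] (M : Matrix ι' ι R) (A : Matrix ι (Fin k) R) (v : ι → R) :
    M * augment A v = augment (M * A) (M *ᵥ v) := by
  ext i j
  induction j using Fin.lastCases <;> simp [mul_apply, mulVec, dotProduct]

theorem det_augment_sub_mulVec (A : Matrix (Fin (k + 1)) (Fin k) R) (v : Fin (k + 1) → R)
    (w : Fin k → R) : (augment A (v - A *ᵥ w)).det = (augment A v).det := by
  have hcol : augment A (v - A *ᵥ w) = (augment A v).updateCol (Fin.last k)
      fun i => ∑ j, (Fin.snoc (-w) 1 : Fin (k + 1) → R) j • augment A v i j := by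
    ext i j
    induction j using Fin.lastCases
    · simp [Fin.sum_univ_castSucc, mulVec, dotProduct, sub_eq_neg_add, mul_comm]
    · simp [(Fin.castSucc_lt_last _).ne]
  rw [hcol, det_updateCol_sum]
  simp

theorem det_augment_of_forall_castSucc_eq_zero (A : Matrix (Fin (k + 1)) (Fin k) R)
    (v : Fin (k + 1) → R) (hv : ∀ i : Fin k, v i.castSucc = 0) :
    (augment A v).det = v (Fin.last k) * (A.submatrix Fin.castSucc id).det := by
  rw [det_succ_column _ (Fin.last k), Fin.sum_univ_castSucc]
  simp only [augment_apply_last, hv, mul_zero, zero_mul, sum_const_zero, zero_add,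
    Fin.succAbove_last, Fin.val_last, ← two_mul, pow_mul, neg_one_sq, one_pow, one_mul]
  congr 2
  ext i j
  simp

theorem det_transpose_mul_self_augment [Fintype ι] (X : Matrix ι (Fin k) R) (y : ι → R)
    (w : Fin k → R) (hw : Xᵀ *ᵥ (y - X *ᵥ w) = 0) :
    ((augment X y)ᵀ * augment X y).det = (Xᵀ * X).det * ((y - X *ᵥ w) ⬝ᵥ (y - X *ᵥ w)) := by
  set r := y - X *ᵥ w
  have hres : (augment X y)ᵀ *ᵥ y - ((augment X y)ᵀ * X) *ᵥ w = (augment X y)ᵀ *ᵥ r := by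
    rw [mulVec_sub, mulVec_mulVec]
  have hcast : ∀ b : Fin k, ((augment X y)ᵀ *ᵥ r) b.castSucc = (Xᵀ *ᵥ r) b := fun b => by
    simp [mulVec, dotProduct]
  have hlast : ((augment X y)ᵀ *ᵥ r) (Fin.last k) = r ⬝ᵥ r := by
    have hy : y = r + X *ᵥ w := by simp [r]
    have hXw : X *ᵥ w ⬝ᵥ r = 0 := by
      rw [dotProduct_comm, dotProduct_mulVec, ← mulVec_transpose, hw, zero_dotProduct]
    calc ((augment X y)ᵀ *ᵥ r) (Fin.last k) = y ⬝ᵥ r := by simp [mulVec, dotProduct]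
      _ = r ⬝ᵥ r := by rw [hy, add_dotProduct, hXw, add_zero]
  have hminor : ((augment X y)ᵀ * X).submatrix Fin.castSucc id = Xᵀ * X := by
    ext a b
    simp [mul_apply]
  rw [mul_augment, ← det_augment_sub_mulVec _ _ w, hres,
    det_augment_of_forall_castSucc_eq_zero _ _ fun b => by rw [hcast, hw, Pi.zero_apply],
    hlast, hminor, mul_comm]

end Augment

end Matrix

section VolumeSampling

variable {n d : ℕ} (X : Matrix (Fin n) (Fin d) ℝ) (y : Fin n → ℝ)

theorem det_transpose_mul_self_eq_sum_det_gram :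
    (Xᵀ * X).det = ∑ S ∈ powersetCard d univ, (gram X S).det := by
  rw [det_mul_eq_sum_det_submatrix, Fintype.card_fin]
  rfl

theorem det_gram_eq_sq {S : Finset (Fin n)} (e : Fin d ≃ {i // i ∈ S}) :
    (gram X S).det = (X.submatrix (fun k => (e k : Fin n)) id).det ^ 2 :=
  det_transpose_mul_self_eq_sq (rowSub X S) e

theorem loss_eq_dotProduct (w : Fin d → ℝ) :
    loss X y w = (y - X *ᵥ w) ⬝ᵥ (y - X *ᵥ w) :=
  sum_congr rfl fun i _ => by simp only [Pi.sub_apply]; ring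

theorem mulVec_subW_apply_of_mem {S : Finset (Fin n)} (hS : S.card = d)
    (hdet : (gram X S).det ≠ 0) {i : Fin n} (hi : i ∈ S) : (X *ᵥ subW X y S) i = y i := by
  have hnormal := transpose_mulVec_sub_mulVec_eq_zero (rowSub X S)
    (fun i : {x // x ∈ S} => y i.1) hdet.isUnit
  have hresid := eq_zero_of_transpose_mulVec_eq_zero (rowSub X S) (S.equivFinOfCardEq hS).symm
    hdet hnormal
  exact (sub_eq_zero.mp (congrFun hresid ⟨i, hi⟩)).symm

theorem det_gram_augment_insert {S : Finset (Fin n)} (hS : S.card = d)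
    (hdet : (gram X S).det ≠ 0) {j : Fin n} (hj : j ∉ S) :
    (gram (augment X y) (insert j S)).det = (gram X S).det * (y j - (X *ᵥ subW X y S) j) ^ 2 := by
  set eS := (S.equivFinOfCardEq hS).symm
  -- `j` comes last, so the residual column is zero except in its last entry.
  set eT : Fin (d + 1) ≃ {i // i ∈ insert j S} :=
    finSuccEquivLast.trans ((Equiv.optionCongr eS).trans (subtypeInsertEquivOption hj).symm)
  set f : Fin (d + 1) → Fin n := fun k => eT k
  have hlast : f (Fin.last d) = j := by simp [f, eT, subtypeInsertEquivOption]
  have hcast : ∀ k, f k.castSucc = eS k := by simp [f, eT, subtypeInsertEquivOption]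
  set w := subW X y S
  have hmulVec : ∀ k, (X.submatrix f id *ᵥ w) k = (X *ᵥ w) (f k) := fun _ => rfl
  have hres : ∀ k : Fin d, (y ∘ f - X.submatrix f id *ᵥ w) k.castSucc = 0 := fun k => by
    rw [Pi.sub_apply, hmulVec, Function.comp_apply, hcast,
      mulVec_subW_apply_of_mem X y hS hdet (eS k).2, sub_self]
  have hminor : (X.submatrix f id).submatrix Fin.castSucc id
      = X.submatrix (fun k => (eS k : Fin n)) id := by
    ext a b
    simp [hcast]
  rw [det_gram_eq_sq (augment X y) eT, det_gram_eq_sq X eS, submatrix_augment,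
    ← det_augment_sub_mulVec _ _ w, det_augment_of_forall_castSucc_eq_zero _ _ hres, hminor,
    Pi.sub_apply, hmulVec, Function.comp_apply, hlast]
  ring

theorem det_gram_mul_loss_subW {S : Finset (Fin n)} (hS : S.card = d)
    (hdet : (gram X S).det ≠ 0) :
    (gram X S).det * loss X y (subW X y S)
      = ∑ j ∈ Sᶜ, (gram (augment X y) (insert j S)).det := by
  have hfit : ∑ i ∈ S, ((X *ᵥ subW X y S) i - y i) ^ 2 = 0 :=
    sum_eq_zero fun i hi => by rw [mulVec_subW_apply_of_mem X y hS hdet hi, sub_self, sq, mul_zero]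
  rw [loss, ← sum_add_sum_compl S, hfit, zero_add, mul_sum]
  refine sum_congr rfl fun j hj => ?_
  rw [det_gram_augment_insert X y hS hdet (mem_compl.mp hj)]
  ring

theorem det_gram_mul_loss_subW_le {S : Finset (Fin n)} (hS : S.card = d) :
    (gram X S).det * loss X y (subW X y S)
      ≤ ∑ j ∈ Sᶜ, (gram (augment X y) (insert j S)).det := by
  by_cases hdet : (gram X S).det = 0
  · rw [hdet, zero_mul]
    exact sum_nonneg fun j _ => det_transpose_mul_self_nonneg _
  · exact (det_gram_mul_loss_subW X y hS hdet).le

theorem sum_sum_det_gram_augment_insert (hX : IsUnit (Xᵀ * X).det) :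
    ∑ S ∈ powersetCard d univ, ∑ j ∈ Sᶜ, (gram (augment X y) (insert j S)).det
      = (d + 1) * ((Xᵀ * X).det * loss X y (optW X y)) := by
  rw [sum_powersetCard_sum_compl_insert d fun T => (gram (augment X y) T).det,
    ← det_transpose_mul_self_eq_sum_det_gram,
    det_transpose_mul_self_augment X y _ (transpose_mulVec_sub_mulVec_eq_zero X y hX),
    loss_eq_dotProduct, nsmul_eq_mul]
  push_cast
  rfl

end VolumeSampling

/-- The expected loss of the size-`d` volume sampled least squares estimator equals
`(d+1) L(w*)` when `X` is in general position, and is at most `(d+1) L(w*)` in general. -/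
theorem volume_sampling_expected_loss {n d : ℕ} (X : Matrix (Fin n) (Fin d) ℝ)
    (y : Fin n → ℝ) (hrank : X.rank = d) :
    ((∀ S : Finset (Fin n), S.card = d → (gram X S).det ≠ 0) →
      ∑ S ∈ Finset.powersetCard d (Finset.univ : Finset (Fin n)),
          ((gram X S).det / (Xᵀ * X).det) * loss X y (subW X y S)
        = ((d : ℝ) + 1) * loss X y (optW X y))
    ∧ ∑ S ∈ Finset.powersetCard d (Finset.univ : Finset (Fin n)),
          ((gram X S).det / (Xᵀ * X).det) * loss X y (subW X y S)
        ≤ ((d : ℝ) + 1) * loss X y (optW X y) := by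
  have hX : IsUnit (Xᵀ * X).det :=
    isUnit_det_transpose_mul_self_of_rank_eq X (by rw [hrank, Fintype.card_fin])
  have hD : 0 < (Xᵀ * X).det := (det_transpose_mul_self_nonneg X).lt_of_ne' hX.ne_zero
  have hdiv : ∑ S ∈ powersetCard d univ, (gram X S).det / (Xᵀ * X).det * loss X y (subW X y S)
      = (∑ S ∈ powersetCard d univ, (gram X S).det * loss X y (subW X y S)) / (Xᵀ * X).det := by
    rw [sum_div]
    exact sum_congr rfl fun _ _ => div_mul_eq_mul_div _ _ _
  have hsum := sum_sum_det_gram_augment_insert X y hX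
  refine ⟨fun hgen => ?_, ?_⟩
  · rw [hdiv, sum_congr rfl fun S hS => det_gram_mul_loss_subW X y (mem_powersetCard_univ.mp hS)
      (hgen S (mem_powersetCard_univ.mp hS)), hsum]
    field_simp
  · rw [hdiv, div_le_iff₀ hD]
    calc _ ≤ ∑ S ∈ powersetCard d univ, ∑ j ∈ Sᶜ, (gram (augment X y) (insert j S)).det :=
          sum_le_sum fun S hS => det_gram_mul_loss_subW_le X y (mem_powersetCard_univ.mp hS)
      _ = _ := by rw [hsum]; ring
end
end

section
/- For every d ≥ 1 there exists a least-squares problem (X, y) with X ∈ ℝ^{(d+1)×d} and y ∈ ℝ^{d+1} such that for every size-d subset S ⊆ {1..d+1}, the interpolating solution w*(S) satisfies L(w*(S)) = (d+1) · L(w*), where L(w) = ‖Xw − y‖² and w* is the least-squares minimizer. Concretely, take the rows of X to be the d+1 vertices of a regular simplex centered at the origin in ℝ^d and y = α·1 for any α ≠ 0. -/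
/-!
Take `d + 1` rows summing to zero (here `e₁, …, e_d` and `-(e₁ + ⋯ + e_d)`) and `y = α𝟙`.
Then the residuals `Xw - y` always sum to `-(d + 1)α`, so by Cauchy–Schwarz the loss is at
least `(d + 1)α²`, attained at `w = 0`. A solution interpolating all rows but one has zero
residuals there, so its remaining residual is the whole sum `-(d + 1)α`, and its loss is
`(d + 1)²α²`.
-/

open Matrix Finset

noncomputable section

lemma Finset.exists_forall_ne_mem_of_card_eq {n : ℕ} {S : Finset (Fin (n + 1))}
    (hS : S.card = n) : ∃ i, ∀ j ≠ i, j ∈ S := by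
  have hcompl : Sᶜ.card = 1 := by rw [card_compl, hS, Fintype.card_fin, Nat.add_sub_cancel_left]
  obtain ⟨i, hi⟩ := card_eq_one.1 hcompl
  refine ⟨i, fun j hj => ?_⟩
  by_contra hjS
  exact hj (mem_singleton.1 (hi ▸ mem_compl.2 hjS))

lemma gram_det_ne_zero {n d : ℕ} {X : Matrix (Fin n) (Fin d) ℝ} {S : Finset (Fin n)}
    (hX : ∀ w, (∀ j ∈ S, (X *ᵥ w) j = 0) → w = 0) : (gram X S).det ≠ 0 := by
  intro hdet
  obtain ⟨w, hw, hGw⟩ := exists_mulVec_eq_zero_iff.2 hdet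
  have hAw : rowSub X S *ᵥ w = 0 := by
    have : w ∈ LinearMap.ker (gram X S).mulVecLin := hGw
    rwa [_root_.gram, ker_mulVecLin_transpose_mul_self] at this
  exact hw (hX w fun j hj => congrFun hAw ⟨j, hj⟩)

section RowsSumToZero

variable {n d : ℕ} {X : Matrix (Fin n) (Fin d) ℝ}

lemma sum_mulVec_eq_zero (hX : 1 ᵥ* X = 0) (w : Fin d → ℝ) : ∑ j, (X *ᵥ w) j = 0 := by
  rw [← one_dotProduct, dotProduct_mulVec, hX, zero_dotProduct]

lemma sum_residual_const (hX : 1 ᵥ* X = 0) (α : ℝ) (w : Fin d → ℝ) :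
    ∑ j, ((X *ᵥ w) j - α) = -(n * α) := by
  simp [sum_sub_distrib, sum_mulVec_eq_zero hX]

lemma mulVec_eq_zero_of_eq_zero_of_ne (hX : 1 ᵥ* X = 0) {w : Fin d → ℝ} {i : Fin n}
    (hw : ∀ j ≠ i, (X *ᵥ w) j = 0) : X *ᵥ w = 0 := by
  have hi : (X *ᵥ w) i = 0 := by
    rw [← sum_mulVec_eq_zero hX w, sum_eq_single i (fun j _ hj => hw j hj) (by simp)]
  funext j
  by_cases hj : j = i
  · exact hj ▸ hi
  · exact hw j hj

lemma mul_sq_le_loss_const (hX : 1 ᵥ* X = 0) (α : ℝ) (w : Fin d → ℝ) :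
    n * α ^ 2 ≤ loss X (fun _ => α) w := by
  rcases Nat.eq_zero_or_pos n with rfl | hn
  · simp [loss]
  have hcs := sq_sum_le_card_mul_sum_sq (s := univ) (f := fun j => (X *ᵥ w) j - α)
  rw [sum_residual_const hX, card_univ, Fintype.card_fin] at hcs
  have hn' : (0 : ℝ) < n := by exact_mod_cast hn
  refine le_of_mul_le_mul_left ?_ hn'
  calc (n : ℝ) * (n * α ^ 2) = (-(n * α)) ^ 2 := by ring
    _ ≤ n * loss X (fun _ => α) w := hcs

lemma loss_const_ne_zero (hX : 1 ᵥ* X = 0) (hn : 0 < n) {α : ℝ} (hα : α ≠ 0)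
    (w : Fin d → ℝ) : loss X (fun _ => α) w ≠ 0 :=
  (lt_of_lt_of_le (by positivity) (mul_sq_le_loss_const hX α w)).ne'

lemma loss_const_of_isMin (hX : 1 ᵥ* X = 0) {α : ℝ} {w : Fin d → ℝ}
    (hw : ∀ v, loss X (fun _ => α) w ≤ loss X (fun _ => α) v) :
    loss X (fun _ => α) w = n * α ^ 2 := by
  refine le_antisymm ?_ (mul_sq_le_loss_const hX α w)
  calc loss X (fun _ => α) w ≤ loss X (fun _ => α) 0 := hw 0
    _ = n * α ^ 2 := by simp [loss]

lemma loss_const_of_interpolates_of_ne (hX : 1 ᵥ* X = 0) {α : ℝ} {w : Fin d → ℝ} {i : Fin n}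
    (hw : ∀ j ≠ i, (X *ᵥ w) j = α) : loss X (fun _ => α) w = (n * α) ^ 2 := by
  have hres : ∀ j ≠ i, (X *ᵥ w) j - α = 0 := fun j hj => sub_eq_zero.2 (hw j hj)
  have hi : (X *ᵥ w) i - α = -(n * α) := by
    rw [← sum_residual_const hX α w, sum_eq_single i (fun j _ hj => hres j hj) (by simp)]
  rw [loss, sum_eq_single i (fun j _ hj => by simp [hres j hj]) (by simp), hi, neg_sq]

end RowsSumToZero

def centeredSimplex (d : ℕ) : Matrix (Fin (d + 1)) (Fin d) ℝ :=
  Matrix.of (Fin.lastCases (-1) fun k => Pi.single k 1)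

lemma one_vecMul_centeredSimplex (d : ℕ) : 1 ᵥ* centeredSimplex d = 0 := by
  funext k
  simp [vecMul, dotProduct, centeredSimplex, Fin.sum_univ_castSucc, Pi.single_apply]

lemma centeredSimplex_mulVec_castSucc (d : ℕ) (w : Fin d → ℝ) (k : Fin d) :
    (centeredSimplex d *ᵥ w) k.castSucc = w k := by
  simp [mulVec, dotProduct, centeredSimplex, Pi.single_apply]

lemma eq_zero_of_centeredSimplex_mulVec_eq_zero (d : ℕ) {w : Fin d → ℝ}
    (hw : centeredSimplex d *ᵥ w = 0) : w = 0 := by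
  funext k
  rw [← centeredSimplex_mulVec_castSucc d w, hw, Pi.zero_apply, Pi.zero_apply]

theorem factor_d_plus_one_tight_general (d : ℕ) :
    ∃ (X : Matrix (Fin (d + 1)) (Fin d) ℝ) (y : Fin (d + 1) → ℝ),
      (∀ S : Finset (Fin (d + 1)), S.card = d → (gram X S).det ≠ 0) ∧
      (∀ w, loss X y w ≠ 0) ∧
      ∀ w : Fin d → ℝ, (∀ v, loss X y w ≤ loss X y v) →
        ∀ S : Finset (Fin (d + 1)), S.card = d →
          ∀ wS : Fin d → ℝ, (∀ j ∈ S, X.mulVec wS j = y j) →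
            loss X y wS = ((d : ℝ) + 1) * loss X y w := by
  have hX := one_vecMul_centeredSimplex d
  refine ⟨centeredSimplex d, fun _ => 1, fun S hS => ?_,
    loss_const_ne_zero hX d.succ_pos one_ne_zero, fun w hw S hS wS hwS => ?_⟩
  · obtain ⟨i, hi⟩ := exists_forall_ne_mem_of_card_eq hS
    exact gram_det_ne_zero fun w hw => eq_zero_of_centeredSimplex_mulVec_eq_zero d
      (mulVec_eq_zero_of_eq_zero_of_ne hX fun j hj => hw j (hi j hj))
  · obtain ⟨i, hi⟩ := exists_forall_ne_mem_of_card_eq hS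
    rw [loss_const_of_interpolates_of_ne hX fun j hj => hwS j (hi j hj),
      loss_const_of_isMin hX hw]
    push_cast
    ring

/-- Tightness of the factor `d+1`: for every `d ≥ 1` there is a least squares problem
`(X, y)` with `d+1` rows, in general position and with nonzero optimal loss, such that
every size-`d` interpolating solution has loss exactly `(d+1)` times the optimal loss. -/
theorem factor_d_plus_one_tight (d : ℕ) (hd : 1 ≤ d) :
    ∃ (X : Matrix (Fin (d + 1)) (Fin d) ℝ) (y : Fin (d + 1) → ℝ),
      (∀ S : Finset (Fin (d + 1)), S.card = d → (gram X S).det ≠ 0) ∧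
      (∀ w, loss X y w ≠ 0) ∧
      ∀ w : Fin d → ℝ, (∀ v, loss X y w ≤ loss X y v) →
        ∀ S : Finset (Fin (d + 1)), S.card = d →
          ∀ wS : Fin d → ℝ, (∀ j ∈ S, X.mulVec wS j = y j) →
            loss X y wS = ((d : ℝ) + 1) * loss X y w :=
  factor_d_plus_one_tight_general d
end
end

section
/- Let X ∈ ℝ^{n×d}, λ ≥ 0, and d_λ = tr(X(X^⊤X + λI)^{−1}X^⊤). Suppose S is generated by λ-regularized reverse iterative volume sampling down to size s ≥ d_λ (at each step removing i ∈ S with probability proportional to det(X_{S∖{i}}^⊤X_{S∖{i}} + λI)/det(X_S^⊤X_S + λI)). Then E[(X_S^⊤X_S + λI)^{−1}] ⪯ ((n − d_λ + 1)/(s − d_λ + 1)) · (X^⊤X + λI)^{−1} in the Loewner order. -/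
open Matrix Finset

noncomputable section

/-- The unnormalized weight `det(X_{S∖{i}}^⊤X_{S∖{i}} + λI)/det(X_S^⊤X_S + λI)` of
removing row `i` from `S` in λ-regularized reverse iterative volume sampling. -/
def remWeight {n d : ℕ} (X : Matrix (Fin n) (Fin d) ℝ) (lam : ℝ) (S : Finset (Fin n))
    (i : Fin n) : ℝ :=
  (gram X (S.erase i) + lam • (1 : Matrix (Fin d) (Fin d) ℝ)).det /
    (gram X S + lam • (1 : Matrix (Fin d) (Fin d) ℝ)).det

/-- The conditional probability `P(S∖{i} | S)` of removing row `i` from `S`. -/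
def remProb {n d : ℕ} (X : Matrix (Fin n) (Fin d) ℝ) (lam : ℝ) (S : Finset (Fin n))
    (i : Fin n) : ℝ :=
  remWeight X lam S i / ∑ j ∈ S, remWeight X lam S j

/-- The probability that λ-regularized reverse iterative volume sampling, started from
`{1..n}`, passes through the subset `S`. -/
def reachProb {n d : ℕ} (X : Matrix (Fin n) (Fin d) ℝ) (lam : ℝ)
    (S : Finset (Fin n)) : ℝ :=
  if h : S = Finset.univ then 1
  else ∑ i ∈ Sᶜ.attach, reachProb X lam (insert i.1 S) * remProb X lam (insert i.1 S) i.1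
termination_by n - S.card
decreasing_by
  have hi : (i.1 : Fin n) ∉ S := by
    have h2 := i.2
    simp only [Finset.mem_compl] at h2
    exact h2
  have h1 : (insert i.1 S).card = S.card + 1 := Finset.card_insert_of_notMem hi
  have h2 : S.card < n := by
    have h3 : S ⊂ Finset.univ := Finset.ssubset_univ_iff.mpr h
    have h4 := Finset.card_lt_card h3
    simpa using h4
  omega

/-!
Write `A_T = X_Tᵀ X_T + λI` and `x_i` for the rows of `X`. By the matrix determinant lemma the
weight of removing `i` from `T` is `w_i = 1 - x_iᵀ A_T⁻¹ x_i`, and these sum to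
`W = |T| - d + λ tr A_T⁻¹ ≥ |T| - d_λ`, because `A_T ⪯ XᵀX + λI` forces `tr A_T⁻¹` above
`tr (XᵀX + λI)⁻¹`. Sherman–Morrison gives `w_i A_{T∖i}⁻¹ ⪯ w_i A_T⁻¹ + A_T⁻¹ x_i x_iᵀ A_T⁻¹`, and
summing over `i ∈ T`, where `∑ A_T⁻¹ x_i x_iᵀ A_T⁻¹ = A_T⁻¹ - λ A_T⁻² ⪯ A_T⁻¹`, yields
`∑ w_i A_{T∖i}⁻¹ ⪯ (W + 1) A_T⁻¹`. So one removal step multiplies the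
expected inverse by at most `(|T| - d_λ + 1)/(|T| - d_λ)`, and these factors telescope from
`|T| = n` down to `s`.
-/

open scoped MatrixOrder

namespace Matrix

theorem PosDef.of_le {ι : Type*} {A B : Matrix ι ι ℝ} (hA : A.PosDef) (hAB : A ≤ B) :
    B.PosDef := by
  simpa using hA.add_posSemidef (le_iff.mp hAB)

variable {ι : Type*} [Fintype ι]

theorem trace_le_trace_of_le {A B : Matrix ι ι ℝ} (h : A ≤ B) : A.trace ≤ B.trace := by
  simpa [trace_sub] using (le_iff.mp h).trace_nonneg

variable [DecidableEq ι]

theorem inv_add_smul_one_mul {α : Type*} [CommRing α] {B : Matrix ι ι α} {c : α}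
    (h : IsUnit (B + c • 1).det) : (B + c • 1)⁻¹ * B = 1 - c • (B + c • 1)⁻¹ := by
  have h1 := nonsing_inv_mul _ h
  rw [Matrix.mul_add, Matrix.mul_smul, Matrix.mul_one] at h1
  exact eq_sub_of_add_eq h1

theorem det_sub_vecMulVec_s16 {α : Type*} [CommRing α] {A : Matrix ι ι α} (hA : IsUnit A.det)
    (u v : ι → α) : (A - vecMulVec u v).det = A.det * (1 - v ⬝ᵥ A⁻¹ *ᵥ u) := by
  rw [sub_eq_add_neg, ← neg_vecMulVec, vecMulVec_eq Unit,
    det_add_replicateCol_mul_replicateRow hA]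
  congr 1
  rw [det_unique]
  simp only [add_apply, one_apply_eq, Matrix.mul_apply, replicateRow_apply, replicateCol_apply,
    Pi.neg_apply, mul_neg, Finset.sum_neg_distrib, ← sub_eq_add_neg]
  exact congrArg _ (dotProduct_mulVec v A⁻¹ u).symm

theorem smul_inv_sub_vecMulVec {α : Type*} [Field α] {A : Matrix ι ι α} (hA : IsUnit A.det)
    (u v : ι → α) (hw : 1 - v ⬝ᵥ A⁻¹ *ᵥ u ≠ 0) :
    (1 - v ⬝ᵥ A⁻¹ *ᵥ u) • (A - vecMulVec u v)⁻¹ =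
      (1 - v ⬝ᵥ A⁻¹ *ᵥ u) • A⁻¹ + vecMulVec (A⁻¹ *ᵥ u) (v ᵥ* A⁻¹) := by
  set w := 1 - v ⬝ᵥ A⁻¹ *ᵥ u with hw_def
  set R := w • A⁻¹ + vecMulVec (A⁻¹ *ᵥ u) (v ᵥ* A⁻¹)
  have hR : (A - vecMulVec u v) * R = w • 1 := by
    rw [sub_mul, Matrix.mul_add, Matrix.mul_add, Matrix.mul_smul, Matrix.mul_smul,
      mul_nonsing_inv _ hA, mul_vecMulVec, mulVec_mulVec, mul_nonsing_inv _ hA, one_mulVec,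
      vecMulVec_mul_vecMulVec, vecMulVec_mul, vecMulVec_smul, hw_def]
    module
  have hinv : (A - vecMulVec u v)⁻¹ = w⁻¹ • R := inv_eq_right_inv <| by
    rw [Matrix.mul_smul, hR, smul_smul, inv_mul_cancel₀ hw, one_smul]
  rw [hinv, smul_smul, mul_inv_cancel₀ hw, one_smul]

theorem two_mul_dotProduct_sub_le_dotProduct_inv {A : Matrix ι ι ℝ} (hA : A.PosSemidef)
    (hdet : IsUnit A.det) (v y : ι → ℝ) :
    2 * (y ⬝ᵥ v) - y ⬝ᵥ A *ᵥ y ≤ v ⬝ᵥ A⁻¹ *ᵥ v := by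
  set z := A⁻¹ *ᵥ v
  have hAz : A *ᵥ z = v := by rw [mulVec_mulVec, mul_nonsing_inv _ hdet, one_mulVec]
  have hzA : z ᵥ* A = v := by
    rw [← mulVec_transpose, ← conjTranspose_eq_transpose_of_trivial, hA.isHermitian.eq, hAz]
  -- the defect is the `A`-norm of `A⁻¹ v - y`
  have h := hA.dotProduct_mulVec_nonneg (z - y)
  rw [star_trivial, mulVec_sub, hAz, sub_dotProduct, dotProduct_sub, dotProduct_sub,
    dotProduct_mulVec z A y, hzA, dotProduct_comm z v] at h
  linarith [dotProduct_comm y v]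

theorem inv_le_inv_of_le {A B : Matrix ι ι ℝ} (hA : A.PosDef) (hAB : A ≤ B) : B⁻¹ ≤ A⁻¹ := by
  have hB : B.PosDef := hA.of_le hAB
  have hBdet : IsUnit B.det := (isUnit_iff_isUnit_det B).mp hB.isUnit
  refine le_iff.mpr (.of_dotProduct_mulVec_nonneg (hA.isHermitian.inv.sub hB.isHermitian.inv)
    fun v => ?_)
  set u := B⁻¹ *ᵥ v
  have hBu : B *ᵥ u = v := by rw [mulVec_mulVec, mul_nonsing_inv _ hBdet, one_mulVec]
  have hAu : u ⬝ᵥ A *ᵥ u ≤ u ⬝ᵥ B *ᵥ u := by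
    simpa [sub_mulVec] using (le_iff.mp hAB).dotProduct_mulVec_nonneg u
  have hvar := two_mul_dotProduct_sub_le_dotProduct_inv hA.posSemidef
    ((isUnit_iff_isUnit_det A).mp hA.isUnit) v u
  have hvBv : v ⬝ᵥ B⁻¹ *ᵥ v = u ⬝ᵥ v := dotProduct_comm _ _
  rw [hBu] at hAu
  rw [star_trivial, sub_mulVec, dotProduct_sub, sub_nonneg]
  linarith [dotProduct_comm u v]

theorem smul_inv_sub_vecMulVec_self_le {A : Matrix ι ι ℝ} (hA : A.IsHermitian)
    (hdet : IsUnit A.det) (x : ι → ℝ) :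
    (1 - x ⬝ᵥ A⁻¹ *ᵥ x) • (A - vecMulVec x x)⁻¹ ≤
      (1 - x ⬝ᵥ A⁻¹ *ᵥ x) • A⁻¹ + vecMulVec (A⁻¹ *ᵥ x) (A⁻¹ *ᵥ x) := by
  by_cases hw : 1 - x ⬝ᵥ A⁻¹ *ᵥ x = 0
  · simpa [hw] using (posSemidef_vecMulVec_self_star (A⁻¹ *ᵥ x)).nonneg
  · have hsymm : x ᵥ* A⁻¹ = A⁻¹ *ᵥ x := by
      rw [← mulVec_transpose, ← conjTranspose_eq_transpose_of_trivial, hA.inv.eq]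
    rw [smul_inv_sub_vecMulVec hdet x x hw, hsymm]

end Matrix

namespace VolumeSampling

variable {n d : ℕ} (X : Matrix (Fin n) (Fin d) ℝ) (lam : ℝ)

/-- The effective degrees of freedom `d_λ`. -/
def effectiveDof : ℝ :=
  trace (X * (Xᵀ * X + lam • 1)⁻¹ * Xᵀ)

theorem gram_eq_sum_vecMulVec (S : Finset (Fin n)) :
    gram X S = ∑ i ∈ S, vecMulVec (X i) (X i) := by
  ext a b
  simp only [_root_.gram, rowSub, Matrix.mul_apply, Matrix.sum_apply, vecMulVec_apply,
    transpose_apply, submatrix_apply, id]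
  exact Finset.sum_coe_sort S fun i => X i a * X i b

theorem gram_univ : gram X univ = Xᵀ * X := by
  ext a b
  simp [gram_eq_sum_vecMulVec, Matrix.mul_apply, Matrix.sum_apply, vecMulVec_apply]

theorem gram_erase {S : Finset (Fin n)} {i : Fin n} (hi : i ∈ S) :
    gram X (S.erase i) = gram X S - vecMulVec (X i) (X i) := by
  rw [gram_eq_sum_vecMulVec, gram_eq_sum_vecMulVec, Finset.sum_erase_eq_sub hi]

theorem gram_le_transpose_mul_self (S : Finset (Fin n)) : gram X S ≤ Xᵀ * X := by
  rw [← gram_univ, gram_eq_sum_vecMulVec, gram_eq_sum_vecMulVec]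
  exact Finset.sum_le_sum_of_subset_of_nonneg (subset_univ S)
    fun i _ _ => (posSemidef_vecMulVec_self_star (X i)).nonneg

variable {lam}

theorem posSemidef_gram_add_smul_one (hlam : 0 ≤ lam) (S : Finset (Fin n)) :
    (gram X S + lam • (1 : Matrix (Fin d) (Fin d) ℝ)).PosSemidef := by
  refine .add ?_ (PosSemidef.one.smul hlam)
  simpa [_root_.gram] using posSemidef_conjTranspose_mul_self (rowSub X S)

theorem sum_dotProduct_mulVec_eq_trace (M : Matrix (Fin d) (Fin d) ℝ) (S : Finset (Fin n)) :
    ∑ i ∈ S, X i ⬝ᵥ M *ᵥ X i = (M * gram X S).trace := by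
  rw [gram_eq_sum_vecMulVec, Finset.mul_sum, trace_sum]
  refine Finset.sum_congr rfl fun i _ => ?_
  rw [mul_vecMulVec, trace_vecMulVec, dotProduct_comm]

theorem effectiveDof_eq (hG : IsUnit (Xᵀ * X + lam • (1 : Matrix (Fin d) (Fin d) ℝ)).det) :
    effectiveDof X lam = d - lam * (Xᵀ * X + lam • (1 : Matrix (Fin d) (Fin d) ℝ))⁻¹.trace := by
  rw [effectiveDof, trace_mul_comm, ← Matrix.mul_assoc, trace_mul_comm, inv_add_smul_one_mul hG]
  simp [trace_sub, trace_smul]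

section Removal

variable {X} {T : Finset (Fin n)}

theorem gram_erase_add_smul_one {i : Fin n} (hi : i ∈ T) :
    gram X (T.erase i) + lam • 1 = gram X T + lam • 1 - vecMulVec (X i) (X i) := by
  rw [gram_erase X hi, sub_add_eq_add_sub]

theorem remWeight_eq (hA : IsUnit (gram X T + lam • 1).det) {i : Fin n} (hi : i ∈ T) :
    remWeight X lam T i = 1 - X i ⬝ᵥ (gram X T + lam • 1)⁻¹ *ᵥ X i := by
  rw [remWeight, gram_erase_add_smul_one hi, det_sub_vecMulVec_s16 hA,
    mul_div_cancel_left₀ _ hA.ne_zero]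

theorem sum_remWeight_eq (hA : IsUnit (gram X T + lam • 1).det) :
    ∑ i ∈ T, remWeight X lam T i = T.card - (d - lam * (gram X T + lam • 1)⁻¹.trace) := by
  rw [Finset.sum_congr rfl fun i hi => remWeight_eq hA hi, Finset.sum_sub_distrib,
    sum_dotProduct_mulVec_eq_trace, inv_add_smul_one_mul hA]
  simp [trace_sub, trace_smul]

theorem card_sub_effectiveDof_le_sum_remWeight (hlam : 0 ≤ lam)
    (hA : IsUnit (gram X T + lam • 1).det) :
    T.card - effectiveDof X lam ≤ ∑ i ∈ T, remWeight X lam T i := by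
  have hApos : (gram X T + lam • 1).PosDef :=
    (posSemidef_gram_add_smul_one X hlam T).posDef_iff_isUnit.mpr
      ((isUnit_iff_isUnit_det _).mpr hA)
  have hAG : gram X T + lam • 1 ≤ Xᵀ * X + lam • 1 := by
    gcongr
    exact gram_le_transpose_mul_self X T
  have hG : IsUnit (Xᵀ * X + lam • (1 : Matrix (Fin d) (Fin d) ℝ)).det :=
    (isUnit_iff_isUnit_det _).mp (hApos.of_le hAG).isUnit
  have htrace := trace_le_trace_of_le (inv_le_inv_of_le hApos hAG)
  rw [sum_remWeight_eq hA, effectiveDof_eq X hG]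
  linarith [mul_le_mul_of_nonneg_left htrace hlam]

theorem sum_remWeight_smul_inv_le (hlam : 0 ≤ lam) (hA : IsUnit (gram X T + lam • 1).det) :
    ∑ i ∈ T, remWeight X lam T i • (gram X (T.erase i) + lam • 1)⁻¹ ≤
      (∑ i ∈ T, remWeight X lam T i + 1) • (gram X T + lam • 1)⁻¹ := by
  set A := gram X T + lam • (1 : Matrix (Fin d) (Fin d) ℝ)
  have hAherm : A.IsHermitian := (posSemidef_gram_add_smul_one X hlam T).isHermitian
  have hinvT : A⁻¹ᵀ = A⁻¹ := by
    rw [← conjTranspose_eq_transpose_of_trivial]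
    exact hAherm.inv.eq
  have hconj (i : Fin n) : A⁻¹ * vecMulVec (X i) (X i) * A⁻¹ =
      vecMulVec (A⁻¹ *ᵥ X i) (A⁻¹ *ᵥ X i) := by
    rw [mul_vecMulVec, vecMulVec_mul, ← mulVec_transpose, hinvT]
  have hsq : 0 ≤ lam • (A⁻¹ * A⁻¹) := by
    simpa [hinvT] using smul_nonneg hlam (posSemidef_conjTranspose_mul_self A⁻¹).nonneg
  calc ∑ i ∈ T, remWeight X lam T i • (gram X (T.erase i) + lam • 1)⁻¹
      ≤ ∑ i ∈ T, (remWeight X lam T i • A⁻¹ + vecMulVec (A⁻¹ *ᵥ X i) (A⁻¹ *ᵥ X i)) :=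
        Finset.sum_le_sum fun i hi => by
          rw [remWeight_eq hA hi, gram_erase_add_smul_one hi]
          exact smul_inv_sub_vecMulVec_self_le hAherm hA (X i)
    _ = (∑ i ∈ T, remWeight X lam T i) • A⁻¹ + A⁻¹ * gram X T * A⁻¹ := by
        simp only [Finset.sum_add_distrib, ← Finset.sum_smul, gram_eq_sum_vecMulVec,
          Finset.mul_sum, Finset.sum_mul, hconj]
    _ = (∑ i ∈ T, remWeight X lam T i) • A⁻¹ + (A⁻¹ - lam • (A⁻¹ * A⁻¹)) := by
        rw [inv_add_smul_one_mul hA, Matrix.sub_mul, Matrix.one_mul, Matrix.smul_mul]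
    _ ≤ (∑ i ∈ T, remWeight X lam T i + 1) • A⁻¹ := by
        rw [add_smul, one_smul]
        gcongr
        exact sub_le_self _ hsq

theorem sum_remProb_smul_inv_le (hlam : 0 ≤ lam) (hT : effectiveDof X lam < T.card) :
    ∑ i ∈ T, remProb X lam T i • (gram X (T.erase i) + lam • 1)⁻¹ ≤
      ((T.card - effectiveDof X lam + 1) / (T.card - effectiveDof X lam)) •
        (gram X T + lam • 1)⁻¹ := by
  by_cases hA : IsUnit (gram X T + lam • (1 : Matrix (Fin d) (Fin d) ℝ)).det
  · set W := ∑ i ∈ T, remWeight X lam T i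
    set m := (T.card : ℝ) - effectiveDof X lam
    have hmW : m ≤ W := card_sub_effectiveDof_le_sum_remWeight hlam hA
    have hm : 0 < m := sub_pos.mpr hT
    have hcoef : (W + 1) / W ≤ (m + 1) / m := by
      rw [add_div, add_div, div_self hm.ne', div_self (hm.trans_le hmW).ne']
      gcongr
    calc ∑ i ∈ T, remProb X lam T i • (gram X (T.erase i) + lam • 1)⁻¹
        = W⁻¹ • ∑ i ∈ T, remWeight X lam T i • (gram X (T.erase i) + lam • 1)⁻¹ := by
          simp only [Finset.smul_sum, smul_smul, remProb, div_eq_inv_mul, W]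
      _ ≤ W⁻¹ • ((W + 1) • (gram X T + lam • 1)⁻¹) :=
          smul_le_smul_of_nonneg_left (sum_remWeight_smul_inv_le hlam hA)
            (inv_nonneg.mpr (hm.le.trans hmW))
      _ = ((W + 1) / W) • (gram X T + lam • 1)⁻¹ := by rw [smul_smul, inv_mul_eq_div]
      _ ≤ ((m + 1) / m) • (gram X T + lam • 1)⁻¹ :=
          smul_le_smul_of_nonneg_right hcoef
            (posSemidef_gram_add_smul_one X hlam T).inv.nonneg
  · -- `λ = 0` with `X_T` rank deficient: `A⁻¹ = 0` and all weights are `_ / 0 = 0`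
    have hdet : (gram X T + lam • (1 : Matrix (Fin d) (Fin d) ℝ)).det = 0 := by
      simpa [isUnit_iff_ne_zero] using hA
    have hweight (i : Fin n) : remWeight X lam T i = 0 := by
      rw [remWeight, hdet, div_zero]
    simp [remProb, hweight, nonsing_inv_apply_not_isUnit _ hA]

end Removal

section Sampling

theorem sum_powersetCard_sum_compl_insert {α M : Type*} [Fintype α] [DecidableEq α]
    [AddCommMonoid M] (k : ℕ) (f : Finset α → α → M) :
    ∑ S ∈ powersetCard k univ, ∑ i ∈ Sᶜ, f (insert i S) i =
      ∑ T ∈ powersetCard (k + 1) univ, ∑ i ∈ T, f T i := by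
  rw [Finset.sum_sigma', Finset.sum_sigma']
  refine Finset.sum_nbij' (fun p => ⟨insert p.2 p.1, p.2⟩) (fun p => ⟨p.1.erase p.2, p.2⟩)
    ?_ ?_ ?_ ?_ fun _ _ => rfl
  · rintro ⟨S, i⟩ hp
    simp only [mem_sigma, mem_powersetCard_univ, mem_compl] at hp ⊢
    exact ⟨by rw [card_insert_of_notMem hp.2, hp.1], mem_insert_self i S⟩
  · rintro ⟨T, i⟩ hp
    simp only [mem_sigma, mem_powersetCard_univ, mem_compl] at hp ⊢
    exact ⟨by rw [card_erase_of_mem hp.2, hp.1, Nat.add_sub_cancel], notMem_erase i T⟩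
  · rintro ⟨S, i⟩ hp
    simp only [mem_sigma, mem_powersetCard_univ, mem_compl] at hp
    simp [erase_insert hp.2]
  · rintro ⟨T, i⟩ hp
    simp only [mem_sigma, mem_powersetCard_univ] at hp
    simp [insert_erase hp.2]

theorem reachProb_univ : reachProb X lam univ = 1 := by
  rw [reachProb, dif_pos rfl]

theorem reachProb_of_ne_univ {S : Finset (Fin n)} (h : S ≠ univ) :
    reachProb X lam S = ∑ i ∈ Sᶜ, reachProb X lam (insert i S) * remProb X lam (insert i S) i := by
  rw [reachProb, dif_neg h]
  exact Finset.sum_attach Sᶜ fun i => reachProb X lam (insert i S) * remProb X lam (insert i S) i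

theorem remProb_nonneg (hlam : 0 ≤ lam) (S : Finset (Fin n)) (i : Fin n) :
    0 ≤ remProb X lam S i := by
  have hweight (j : Fin n) : 0 ≤ remWeight X lam S j :=
    div_nonneg (posSemidef_gram_add_smul_one X hlam _).det_nonneg
      (posSemidef_gram_add_smul_one X hlam _).det_nonneg
  exact div_nonneg (hweight i) (Finset.sum_nonneg fun j _ => hweight j)

theorem reachProb_nonneg (hlam : 0 ≤ lam) (S : Finset (Fin n)) : 0 ≤ reachProb X lam S := by
  refine Finset.strongDownwardInductionOn (n := n) S (fun T ih _ => ?_)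
    ((card_le_univ S).trans_eq (Fintype.card_fin n))
  by_cases hT : T = univ
  · rw [hT, reachProb_univ]
    exact zero_le_one
  rw [reachProb_of_ne_univ X hT]
  refine Finset.sum_nonneg fun i hi => mul_nonneg ?_ (remProb_nonneg X hlam _ _)
  exact ih ((card_le_univ _).trans_eq (Fintype.card_fin n)) (ssubset_insert (mem_compl.mp hi))

variable (lam) in
/-- `E[(X_Sᵀ X_S + λI)⁻¹]` for the size-`k` set `S` produced by the sampling. -/
def expectedInv (k : ℕ) : Matrix (Fin d) (Fin d) ℝ :=
  ∑ S ∈ powersetCard k univ, reachProb X lam S • (gram X S + lam • 1)⁻¹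

theorem expectedInv_self : expectedInv X lam n = (Xᵀ * X + lam • 1)⁻¹ := by
  have huniv : powersetCard n (univ : Finset (Fin n)) = {univ} := by
    simpa using powersetCard_self (univ : Finset (Fin n))
  rw [expectedInv, huniv, sum_singleton, reachProb_univ, one_smul, gram_univ]

theorem expectedInv_eq_sum_succ {k : ℕ} (hk : k < n) :
    expectedInv X lam k = ∑ T ∈ powersetCard (k + 1) univ,
      reachProb X lam T • ∑ i ∈ T, remProb X lam T i • (gram X (T.erase i) + lam • 1)⁻¹ := by
  simp only [Finset.smul_sum, smul_smul]
  rw [← sum_powersetCard_sum_compl_insert k fun T i =>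
    (reachProb X lam T * remProb X lam T i) • (gram X (T.erase i) + lam • 1)⁻¹]
  refine Finset.sum_congr rfl fun S hS => ?_
  have hS : S ≠ univ := by
    rintro rfl
    simp at hS
    omega
  rw [reachProb_of_ne_univ X hS, Finset.sum_smul]
  exact Finset.sum_congr rfl fun i hi => by rw [erase_insert (mem_compl.mp hi)]

theorem expectedInv_le_smul_succ (hlam : 0 ≤ lam) {k : ℕ} (hk : effectiveDof X lam ≤ k)
    (hkn : k < n) :
    expectedInv X lam k ≤
      ((k + 1 - effectiveDof X lam + 1) / (k + 1 - effectiveDof X lam)) •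
        expectedInv X lam (k + 1) := by
  rw [expectedInv_eq_sum_succ X hkn, expectedInv, Finset.smul_sum]
  refine Finset.sum_le_sum fun T hT => ?_
  have hcard : (T.card : ℝ) = k + 1 := by
    rw [(mem_powersetCard_univ.mp hT), Nat.cast_succ]
  have hstep := sum_remProb_smul_inv_le hlam (T := T) (by linarith)
  rw [hcard] at hstep
  rw [smul_comm]
  exact smul_le_smul_of_nonneg_left hstep (reachProb_nonneg X hlam T)

theorem expectedInv_le (hlam : 0 ≤ lam) {k : ℕ} (hk : effectiveDof X lam ≤ k) (hkn : k ≤ n) :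
    expectedInv X lam k ≤
      ((n - effectiveDof X lam + 1) / (k - effectiveDof X lam + 1)) • (Xᵀ * X + lam • 1)⁻¹ := by
  set dl := effectiveDof X lam
  refine Nat.decreasingInduction' (fun j hjn hkj ih => ?_) hkn ?_
  · have hj : dl ≤ j := hk.trans (Nat.cast_le.mpr hkj)
    calc expectedInv X lam j
        ≤ ((j + 1 - dl + 1) / (j + 1 - dl)) • expectedInv X lam (j + 1) :=
          expectedInv_le_smul_succ X hlam hj hjn
      _ ≤ ((j + 1 - dl + 1) / (j + 1 - dl)) •
            (((n - dl + 1) / ((j + 1 : ℕ) - dl + 1)) • (Xᵀ * X + lam • 1)⁻¹) :=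
          smul_le_smul_of_nonneg_left ih (div_nonneg (by linarith) (by linarith))
      _ = ((n - dl + 1) / (j - dl + 1)) • (Xᵀ * X + lam • 1)⁻¹ := by
          rw [smul_smul]
          congr 1
          push_cast
          rw [div_mul_div_comm, div_eq_div_iff (by nlinarith) (by linarith)]
          ring
  · have hn : (n : ℝ) - dl + 1 ≠ 0 := by
      have : (k : ℝ) ≤ n := Nat.cast_le.mpr hkn
      linarith
    rw [expectedInv_self, div_self hn, one_smul]

end Sampling

end VolumeSampling

/-- Regularized second moment bound: for λ-regularized size-`s` volume sampling with
`s ≥ d_λ`, `E[(X_S^⊤X_S + λI)^{−1}] ⪯ ((n − d_λ + 1)/(s − d_λ + 1)) (X^⊤X + λI)^{−1}`,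
where `d_λ = tr(X(X^⊤X + λI)^{−1}X^⊤)`. -/
theorem regularized_volume_sampling_second_moment {n d : ℕ}
    (X : Matrix (Fin n) (Fin d) ℝ) (lam : ℝ) (hlam : 0 ≤ lam) (s : ℕ) (hsn : s ≤ n)
    (hs : Matrix.trace (X * (Xᵀ * X + lam • 1)⁻¹ * Xᵀ) ≤ (s : ℝ)) :
    (((((n : ℝ) - Matrix.trace (X * (Xᵀ * X + lam • 1)⁻¹ * Xᵀ) + 1) /
          ((s : ℝ) - Matrix.trace (X * (Xᵀ * X + lam • 1)⁻¹ * Xᵀ) + 1)) •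
            (Xᵀ * X + lam • 1)⁻¹
        - ∑ S ∈ Finset.powersetCard s (Finset.univ : Finset (Fin n)),
            reachProb X lam S •
              (gram X S + lam • (1 : Matrix (Fin d) (Fin d) ℝ))⁻¹) :
        Matrix (Fin d) (Fin d) ℝ).PosSemidef :=
  VolumeSampling.expectedInv_le X hlam hs hsn
end
end

section
/- Let X ∈ ℝ^{n×d}, λ ≥ 0, w̃ ∈ ℝ^d, and y = Xw̃ + ξ where ξ is a mean-zero random vector with Var[ξ] ⪯ σ²I. For fixed S, let w_λ*(S) = (X_S^⊤X_S + λI)^{−1}X_S^⊤ y_S. If λ ≤ σ²/‖w̃‖², then E_ξ[‖w_λ*(S) − w̃‖²] ≤ σ² · tr((X_S^⊤X_S + λI)^{−1}). -/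
/-!
With `A = X_SᵀX_S + λI`, the error of the ridge estimator is `A⁻¹X_Sᵀξ_S − λA⁻¹w̃`. The noise is
centred, so the cross term vanishes and the mean squared error is the variance term
`E‖A⁻¹X_Sᵀξ_S‖² ≤ σ² tr(A⁻¹X_SᵀX_SA⁻¹) = σ²(tr A⁻¹ − λ tr A⁻²)` plus the bias term `λ²‖A⁻¹w̃‖²`.
By Cauchy–Schwarz the bias term is at most `λ² tr(A⁻²)‖w̃‖² ≤ λσ² tr A⁻²`, which is exactly the
slack `σ²λ tr A⁻²` left by the variance term.
-/

open Matrix Finset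

noncomputable section

namespace Matrix

variable {ι κ : Type*} [Fintype ι] [Fintype κ]

theorem trace_mul_transpose_eq_sum (M : Matrix ι κ ℝ) : trace (M * Mᵀ) = ∑ i, M i ⬝ᵥ M i :=
  rfl

theorem mulVec_dotProduct_self_le (B : Matrix ι κ ℝ) (w : κ → ℝ) :
    B *ᵥ w ⬝ᵥ B *ᵥ w ≤ trace (B * Bᵀ) * (w ⬝ᵥ w) := by
  rw [trace_mul_transpose_eq_sum, Finset.sum_mul]
  refine Finset.sum_le_sum fun i _ => ?_
  simpa only [dotProduct, mulVec, sq] using Finset.sum_mul_sq_le_sq_mul_sq univ (B i) w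

theorem dotProduct_mulVec_le_of_posSemidef_sub [DecidableEq κ] {C : Matrix κ κ ℝ} {s : ℝ}
    (h : (s • (1 : Matrix κ κ ℝ) - C).PosSemidef) (v : κ → ℝ) :
    v ⬝ᵥ C *ᵥ v ≤ s * (v ⬝ᵥ v) := by
  have := h.dotProduct_mulVec_nonneg v
  simp only [star_trivial, sub_mulVec, smul_mulVec, one_mulVec, dotProduct_sub,
    dotProduct_smul, smul_eq_mul] at this
  linarith

theorem sq_mul_mulVec_dotProduct_self_le (B : Matrix ι κ ℝ) {lam s : ℝ} {w : κ → ℝ}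
    (hlam : 0 ≤ lam) (h : lam * (w ⬝ᵥ w) ≤ s) :
    lam ^ 2 * (B *ᵥ w ⬝ᵥ B *ᵥ w) ≤ s * (lam * trace (B * Bᵀ)) := by
  have htr : 0 ≤ trace (B * Bᵀ) :=
    Finset.sum_nonneg fun i _ => dotProduct_star_self_nonneg (B i)
  calc lam ^ 2 * (B *ᵥ w ⬝ᵥ B *ᵥ w) ≤ lam ^ 2 * (trace (B * Bᵀ) * (w ⬝ᵥ w)) := by
        gcongr
        exact mulVec_dotProduct_self_le B w
    _ = lam * trace (B * Bᵀ) * (lam * (w ⬝ᵥ w)) := by ring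
    _ ≤ lam * trace (B * Bᵀ) * s := mul_le_mul_of_nonneg_left h (mul_nonneg hlam htr)
    _ = s * (lam * trace (B * Bᵀ)) := by ring

variable [DecidableEq ι] (R : Matrix κ ι ℝ) {lam : ℝ}

theorem ridge_inv_mul_gram (hA : IsUnit (Rᵀ * R + lam • (1 : Matrix ι ι ℝ)).det) :
    (Rᵀ * R + lam • (1 : Matrix ι ι ℝ))⁻¹ * (Rᵀ * R)
      = 1 - lam • (Rᵀ * R + lam • (1 : Matrix ι ι ℝ))⁻¹ := by
  have h := nonsing_inv_mul _ hA
  rw [Matrix.mul_add, Matrix.mul_smul, Matrix.mul_one] at h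
  rw [eq_sub_iff_add_eq, h]

theorem ridge_estimate_sub_eq (hA : IsUnit (Rᵀ * R + lam • (1 : Matrix ι ι ℝ)).det) (w : ι → ℝ)
    (e : κ → ℝ) :
    (Rᵀ * R + lam • (1 : Matrix ι ι ℝ))⁻¹ *ᵥ (Rᵀ *ᵥ (R *ᵥ w + e)) - w
      = ((Rᵀ * R + lam • (1 : Matrix ι ι ℝ))⁻¹ * Rᵀ) *ᵥ e
        - lam • ((Rᵀ * R + lam • (1 : Matrix ι ι ℝ))⁻¹ *ᵥ w) := by
  rw [mulVec_add, mulVec_add, mulVec_mulVec, mulVec_mulVec, mulVec_mulVec, Matrix.mul_assoc,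
    ridge_inv_mul_gram R hA, sub_mulVec, one_mulVec, smul_mulVec]
  abel

theorem trace_ridge_mul_transpose (hA : IsUnit (Rᵀ * R + lam • (1 : Matrix ι ι ℝ)).det) :
    trace (((Rᵀ * R + lam • (1 : Matrix ι ι ℝ))⁻¹ * Rᵀ)
        * ((Rᵀ * R + lam • (1 : Matrix ι ι ℝ))⁻¹ * Rᵀ)ᵀ)
      = trace (Rᵀ * R + lam • (1 : Matrix ι ι ℝ))⁻¹
        - lam * trace ((Rᵀ * R + lam • (1 : Matrix ι ι ℝ))⁻¹
          * ((Rᵀ * R + lam • (1 : Matrix ι ι ℝ))⁻¹)ᵀ) := by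
  have hsymm : (Rᵀ * R + lam • (1 : Matrix ι ι ℝ))ᵀ = Rᵀ * R + lam • 1 := by
    simp [transpose_add, transpose_mul]
  rw [transpose_mul, transpose_transpose, transpose_nonsing_inv, hsymm, Matrix.mul_assoc,
    ← Matrix.mul_assoc Rᵀ, ← Matrix.mul_assoc, ridge_inv_mul_gram R hA, Matrix.sub_mul,
    Matrix.one_mul, smul_mul, trace_sub, trace_smul, smul_eq_mul]

end Matrix

open MeasureTheory

section SecondMoments

variable {Ω κ : Type*} [MeasurableSpace Ω] {μ : Measure Ω} [Fintype κ] {e : Ω → κ → ℝ}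

theorem integrable_dotProduct (he : ∀ k, Integrable (fun ω => e ω k) μ) (v : κ → ℝ) :
    Integrable (fun ω => v ⬝ᵥ e ω) μ :=
  integrable_finsetSum _ fun k _ => (he k).const_mul (v k)

theorem integral_dotProduct_eq_zero (he : ∀ k, Integrable (fun ω => e ω k) μ)
    (hmean : ∀ k, ∫ ω, e ω k ∂μ = 0) (v : κ → ℝ) : ∫ ω, v ⬝ᵥ e ω ∂μ = 0 := by
  simp only [dotProduct]
  rw [integral_finsetSum _ fun k _ => (he k).const_mul (v k)]
  simp [integral_const_mul, hmean]

theorem dotProduct_sq_eq_sum (v x : κ → ℝ) :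
    (v ⬝ᵥ x) ^ 2 = ∑ k, ∑ l, v k * v l * (x k * x l) := by
  rw [dotProduct, sq, Finset.sum_mul_sum]
  exact Finset.sum_congr rfl fun k _ => Finset.sum_congr rfl fun l _ => by ring

theorem integrable_dotProduct_sq (he : ∀ k l, Integrable (fun ω => e ω k * e ω l) μ)
    (v : κ → ℝ) : Integrable (fun ω => (v ⬝ᵥ e ω) ^ 2) μ := by
  simp only [dotProduct_sq_eq_sum]
  exact integrable_finsetSum _ fun k _ =>
    integrable_finsetSum _ fun l _ => (he k l).const_mul _

theorem integral_dotProduct_sq (he : ∀ k l, Integrable (fun ω => e ω k * e ω l) μ)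
    (v : κ → ℝ) :
    ∫ ω, (v ⬝ᵥ e ω) ^ 2 ∂μ = v ⬝ᵥ (of fun k l => ∫ ω, e ω k * e ω l ∂μ) *ᵥ v := by
  simp only [dotProduct_sq_eq_sum]
  rw [integral_finsetSum _ fun k _ =>
    integrable_finsetSum _ fun l _ => (he k l).const_mul _]
  simp only [dotProduct, mulVec, of_apply, Finset.mul_sum]
  refine Finset.sum_congr rfl fun k _ => ?_
  rw [integral_finsetSum _ fun l _ => (he k l).const_mul _]
  exact Finset.sum_congr rfl fun l _ => by rw [integral_const_mul]; ring

theorem integral_sub_const_sq [IsProbabilityMeasure μ] {Y : Ω → ℝ} (hY : Integrable Y μ)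
    (hY2 : Integrable (fun ω => Y ω ^ 2) μ) (hmean : ∫ ω, Y ω ∂μ = 0) (c : ℝ) :
    ∫ ω, (Y ω - c) ^ 2 ∂μ = ∫ ω, Y ω ^ 2 ∂μ + c ^ 2 := by
  have hlin : Integrable (fun ω => -2 * c * Y ω + c ^ 2) μ :=
    (hY.const_mul _).add (integrable_const _)
  calc ∫ ω, (Y ω - c) ^ 2 ∂μ = ∫ ω, Y ω ^ 2 + (-2 * c * Y ω + c ^ 2) ∂μ := by
        congr 1; ext ω; ring
    _ = ∫ ω, Y ω ^ 2 ∂μ + c ^ 2 := by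
        rw [integral_add hY2 hlin, integral_add (hY.const_mul _) (integrable_const _),
          integral_const_mul, hmean]
        simp

theorem integral_sum_sq_mulVec_sub_le [IsProbabilityMeasure μ] {ι : Type*} [Fintype ι]
    [DecidableEq κ] (he : ∀ k, Integrable (fun ω => e ω k) μ)
    (he2 : ∀ k l, Integrable (fun ω => e ω k * e ω l) μ) (hmean : ∀ k, ∫ ω, e ω k ∂μ = 0)
    {s : ℝ} (hvar : (s • (1 : Matrix κ κ ℝ) - of fun k l => ∫ ω, e ω k * e ω l ∂μ).PosSemidef)
    (M : Matrix ι κ ℝ) (c : ι → ℝ) :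
    ∫ ω, ∑ i, ((M *ᵥ e ω) i - c i) ^ 2 ∂μ ≤ s * trace (M * Mᵀ) + c ⬝ᵥ c := by
  have hterm : ∀ i, ∫ ω, ((M *ᵥ e ω) i - c i) ^ 2 ∂μ
      = M i ⬝ᵥ (of fun k l => ∫ ω, e ω k * e ω l ∂μ) *ᵥ M i + c i * c i := by
    intro i
    rw [← integral_dotProduct_sq he2, ← sq]
    exact integral_sub_const_sq (integrable_dotProduct he _) (integrable_dotProduct_sq he2 _)
      (integral_dotProduct_eq_zero he hmean _) _
  have hint : ∀ i, Integrable (fun ω => ((M *ᵥ e ω) i - c i) ^ 2) μ := fun i =>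
    (((memLp_two_iff_integrable_sq (integrable_dotProduct he (M i)).1).2
      (integrable_dotProduct_sq he2 (M i))).sub (memLp_const (c i))).integrable_sq
  rw [integral_finsetSum _ fun i _ => hint i, Finset.sum_congr rfl fun i _ => hterm i,
    Finset.sum_add_distrib, trace_mul_transpose_eq_sum, Finset.mul_sum]
  exact add_le_add_left
    (Finset.sum_le_sum fun i _ => dotProduct_mulVec_le_of_posSemidef_sub hvar (M i)) _

end SecondMoments

/-- MSE bound for the subsampled ridge estimator under bounded white noise:
if `y = Xw̃ + ξ` with `E[ξ] = 0`, `Var[ξ] ⪯ σ²I`, and `λ‖w̃‖² ≤ σ²`, then for any fixed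
subset `S`, `E_ξ[‖w_λ*(S) − w̃‖²] ≤ σ² tr((X_S^⊤X_S + λI)^{−1})`. -/
theorem ridge_mse_bound {n d : ℕ} (X : Matrix (Fin n) (Fin d) ℝ) (lam σ : ℝ)
    (hlam : 0 ≤ lam) (wt : Fin d → ℝ) (S : Finset (Fin n))
    (hinv : IsUnit (gram X S + lam • (1 : Matrix (Fin d) (Fin d) ℝ)).det)
    {Ω : Type*} [MeasurableSpace Ω] (μ : Measure Ω) [IsProbabilityMeasure μ]
    (ξ : Ω → Fin n → ℝ)
    (hint1 : ∀ i, Integrable (fun ω => ξ ω i) μ)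
    (hint2 : ∀ i j, Integrable (fun ω => ξ ω i * ξ ω j) μ)
    (hmean : ∀ i, ∫ ω, ξ ω i ∂μ = 0)
    (hvar : (σ ^ 2 • (1 : Matrix (Fin n) (Fin n) ℝ)
      - Matrix.of fun i j => ∫ ω, ξ ω i * ξ ω j ∂μ).PosSemidef)
    (hlw : lam * (∑ i, wt i ^ 2) ≤ σ ^ 2) :
    (∫ ω, ∑ i, ((gram X S + lam • (1 : Matrix (Fin d) (Fin d) ℝ))⁻¹.mulVec
        ((rowSub X S)ᵀ.mulVec (fun k : {x // x ∈ S} => X.mulVec wt k.1 + ξ ω k.1)) i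
          - wt i) ^ 2 ∂μ)
      ≤ σ ^ 2 * Matrix.trace (gram X S + lam • (1 : Matrix (Fin d) (Fin d) ℝ))⁻¹ := by
  set R := rowSub X S
  rw [show gram X S = Rᵀ * R from rfl] at hinv ⊢
  set B := (Rᵀ * R + lam • (1 : Matrix (Fin d) (Fin d) ℝ))⁻¹
  have herr : ∀ ω, B *ᵥ (Rᵀ *ᵥ fun k : {x // x ∈ S} => (X *ᵥ wt) k.1 + ξ ω k.1) - wt
      = (B * Rᵀ) *ᵥ (fun k => ξ ω k.1) - lam • (B *ᵥ wt) := fun ω =>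
    ridge_estimate_sub_eq R hinv wt _
  have hvarS : (σ ^ 2 • (1 : Matrix S S ℝ)
      - of fun k l : S => ∫ ω, ξ ω k.1 * ξ ω l.1 ∂μ).PosSemidef := by
    rw [← submatrix_one _ Subtype.val_injective]
    exact hvar.submatrix _
  calc _ = ∫ ω, ∑ i, (((B * Rᵀ) *ᵥ fun k => ξ ω k.1) i - (lam • (B *ᵥ wt)) i) ^ 2 ∂μ := by
        simp only [← Pi.sub_apply, herr]
    _ ≤ σ ^ 2 * trace ((B * Rᵀ) * (B * Rᵀ)ᵀ) + lam • (B *ᵥ wt) ⬝ᵥ lam • (B *ᵥ wt) :=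
        integral_sum_sq_mulVec_sub_le (fun k => hint1 k.1) (fun k l => hint2 k.1 l.1)
          (fun k => hmean k.1) hvarS (B * Rᵀ) (lam • (B *ᵥ wt))
    _ = σ ^ 2 * (trace B - lam * trace (B * Bᵀ)) + lam ^ 2 * (B *ᵥ wt ⬝ᵥ B *ᵥ wt) := by
        rw [trace_ridge_mul_transpose R hinv, smul_dotProduct, dotProduct_smul, smul_eq_mul,
          smul_eq_mul]
        ring
    _ ≤ σ ^ 2 * trace B := by
        have hw : lam * (wt ⬝ᵥ wt) ≤ σ ^ 2 := by simpa only [dotProduct, sq] using hlw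
        linarith [sq_mul_mulVec_dotProduct_self_le B hlam hw]
end
end
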